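/- arXiv:math/0607562 — 9 statements merged into one kernel-verified Lean document; each statement's English description precedes it below -/
import Mathlib

section
/- Let (W,S) be a Coxeter system and T its set of reflections, viewed as a root set with r_t = t and W acting by conjugation. Then W has the presentation by conjugation with respect to T: the canonical surjection from the group Ŵ presented by generators (r̂_t)_{t∈T} with relations r̂_t² = 1 and r̂_t r̂_{t'} r̂_t^{-1} = r̂_{t t' t^{-1}} onto W is an isomorphism. -/
/-- The set of reflections of a Coxeter system. -/
def reflSet {B W : Type*} [Group W] {M : CoxeterMatrix B} (cs : CoxeterSystem M W) : Set W :=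
  {x : W | ∃ (w : W) (i : B), x = w * cs.simple i * w⁻¹}

/-- Conjugation action of `W` on its set of reflections. -/
def conjAct {B W : Type*} [Group W] {M : CoxeterMatrix B} (cs : CoxeterSystem M W)
    (w : W) (t : reflSet cs) : reflSet cs :=
  ⟨w * t.1 * w⁻¹, by
    obtain ⟨t, w', i, rfl⟩ := t
    exact ⟨w * w', i, by group⟩⟩

/-- The relations of the presentation by conjugation of a root set `(R, r, act)`:
`r̂_α = r̂_β` whenever `r α = r β`, `r̂_α² = 1`, and
`r̂_α r̂_β r̂_α⁻¹ = r̂_{r α (β)}`. -/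
def conjRels {R W : Type*} [Group W] (r : R → W) (act : W → R → R) : Set (FreeGroup R) :=
  {x | ∃ α β : R, r α = r β ∧ x = FreeGroup.of α * (FreeGroup.of β)⁻¹} ∪
  {x | ∃ α : R, x = FreeGroup.of α * FreeGroup.of α} ∪
  {x | ∃ α β : R, x = FreeGroup.of α * FreeGroup.of β * (FreeGroup.of α)⁻¹ *
      (FreeGroup.of (act (r α) β))⁻¹}

section Aux

variable {B W : Type*} [Group W] {M : CoxeterMatrix B} (cs : CoxeterSystem M W)

private abbrev pbcRels (cs : CoxeterSystem M W) : Set (FreeGroup (reflSet cs)) :=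
  conjRels (Subtype.val : reflSet cs → W) (fun w t => conjAct cs w t)

private lemma pbc_mk_eq_one {x : FreeGroup (reflSet cs)} (hx : x ∈ pbcRels cs) :
    PresentedGroup.mk (pbcRels cs) x = 1 :=
  (QuotientGroup.eq_one_iff x).mpr (Subgroup.subset_normalClosure hx)

private lemma pbc_of_eq {a b : reflSet cs} (hab : a.1 = b.1) :
    (PresentedGroup.of a : PresentedGroup (pbcRels cs)) = PresentedGroup.of b :=
  congrArg _ (Subtype.ext hab)

private lemma pbc_sq (α : reflSet cs) :
    (PresentedGroup.of α : PresentedGroup (pbcRels cs)) * PresentedGroup.of α = 1 := by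
  have hx : (FreeGroup.of α * FreeGroup.of α) ∈ pbcRels cs :=
    Set.mem_union_left _ (Set.mem_union_right _ ⟨α, rfl⟩)
  have := pbc_mk_eq_one cs hx
  rwa [map_mul] at this

private lemma pbc_conj (α β : reflSet cs) :
    (PresentedGroup.of α : PresentedGroup (pbcRels cs)) * PresentedGroup.of β *
      (PresentedGroup.of α)⁻¹ = PresentedGroup.of (conjAct cs α.1 β) := by
  have hx : (FreeGroup.of α * FreeGroup.of β * (FreeGroup.of α)⁻¹ *
      (FreeGroup.of (conjAct cs α.1 β))⁻¹) ∈ pbcRels cs :=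
    Set.mem_union_right _ ⟨α, β, rfl⟩
  have h1 := pbc_mk_eq_one cs hx
  rw [map_mul, map_mul, map_mul, map_inv, map_inv] at h1
  exact mul_inv_eq_one.mp h1

private lemma simple_mem_reflSet (i : B) : cs.simple i ∈ reflSet cs :=
  ⟨1, i, by simp⟩

/-- The braid relations hold in the presented group. -/
private lemma pbc_braid (i j : B) :
    ((PresentedGroup.of ⟨cs.simple i, simple_mem_reflSet cs i⟩ :
        PresentedGroup (pbcRels cs)) *
      PresentedGroup.of ⟨cs.simple j, simple_mem_reflSet cs j⟩) ^ M i j = 1 := by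
  set s := cs.simple i with hs_def
  set t := cs.simple j with ht_def
  set u := s * t with hu_def
  have hss : s * s = 1 := cs.simple_mul_simple_self i
  have hsinv : s⁻¹ = s := cs.inv_simple i
  have htinv : t⁻¹ = t := cs.inv_simple j
  have huinv : u⁻¹ = t * s := by rw [hu_def, mul_inv_rev, hsinv, htinv]
  -- semiconjugation facts
  have h1 : SemiconjBy s u u⁻¹ := by
    unfold SemiconjBy
    rw [huinv, hu_def, ← mul_assoc, hss, one_mul, mul_assoc, hss, mul_one]
  have h2 : SemiconjBy s u⁻¹ u := by
    have := h1.inv_right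
    rwa [inv_inv] at this
  have hpow' : ∀ n : ℕ, s * (u ^ n)⁻¹ = u ^ n * s := by
    intro n
    have := h2.pow_right n
    rwa [inv_pow] at this
  have hsu : s * u⁻¹ = u * s := h2.eq
  -- the reflections (st)^k s
  set v : ℕ → W := fun k => u ^ k * s with hv_def
  have hv : ∀ k, v k ∈ reflSet cs := by
    intro k
    rcases Nat.even_or_odd k with ⟨l, rfl⟩ | ⟨l, rfl⟩
    · refine ⟨u ^ l, i, ?_⟩
      show u ^ (l + l) * s = u ^ l * s * (u ^ l)⁻¹
      rw [mul_assoc, hpow' l, ← mul_assoc, ← pow_add]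
    · refine ⟨u ^ l * s, j, ?_⟩
      show u ^ (2 * l + 1) * s = u ^ l * s * t * (u ^ l * s)⁻¹
      symm
      calc u ^ l * s * t * (u ^ l * s)⁻¹
          = u ^ l * s * t * (s * (u ^ l)⁻¹) := by rw [mul_inv_rev, hsinv]
        _ = u ^ l * s * t * (u ^ l * s) := by rw [hpow' l]
        _ = u ^ l * (s * t) * u ^ l * s := by group
        _ = u ^ l * u ^ 1 * u ^ l * s := by rw [pow_one]
        _ = u ^ (2 * l + 1) * s := by
            rw [← pow_add, ← pow_add]
            congr 2
            omega
  -- key conjugation identity in W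
  have hvconj : ∀ k : ℕ, v (k + 1) * v k * (v (k + 1))⁻¹ = v (k + 2) := by
    intro k
    show u ^ (k + 1) * s * (u ^ k * s) * (u ^ (k + 1) * s)⁻¹ = u ^ (k + 2) * s
    calc u ^ (k + 1) * s * (u ^ k * s) * (u ^ (k + 1) * s)⁻¹
        = u ^ (k + 1) * s * (u ^ k * s) * (s * (u ^ (k + 1))⁻¹) := by
          rw [mul_inv_rev, hsinv]
      _ = u ^ (k + 1) * s * u ^ k * (s * s) * (u ^ (k + 1))⁻¹ := by group
      _ = u ^ (k + 1) * s * u ^ k * (u ^ (k + 1))⁻¹ := by rw [hss, mul_one]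
      _ = u ^ (k + 1) * (s * u⁻¹) := by group
      _ = u ^ (k + 1) * (u * s) := by rw [hsu]
      _ = u ^ (k + 2) * s := by group
  -- the elements c k in the presented group
  set c : ℕ → PresentedGroup (pbcRels cs) :=
    fun k => PresentedGroup.of ⟨v k, hv k⟩ with hc_def
  have hstep : ∀ k : ℕ, c (k + 1) * c k * (c (k + 1))⁻¹ = c (k + 2) := by
    intro k
    calc c (k + 1) * c k * (c (k + 1))⁻¹
        = PresentedGroup.of (conjAct cs (v (k + 1)) ⟨v k, hv k⟩) :=
          pbc_conj cs ⟨v (k + 1), hv (k + 1)⟩ ⟨v k, hv k⟩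
      _ = c (k + 2) := pbc_of_eq cs (hvconj k)
  have hsq : ∀ k, c k * c k = 1 := fun k => pbc_sq cs _
  have hL1 : ∀ k, c (k + 1) * c k = c 1 * c 0 := by
    intro k
    induction k with
    | zero => rfl
    | succ n ih =>
        rw [← ih, ← hstep n, inv_mul_cancel_right]
  have hL2 : ∀ n, (c 1 * c 0) ^ n = c n * c 0 := by
    intro n
    induction n with
    | zero => rw [pow_zero, hsq 0]
    | succ n ih =>
        rw [pow_succ', ih, ← hL1 n, mul_assoc (c (n + 1)), ← mul_assoc (c n),
          hsq n, one_mul]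
  -- identify of ⟨s⟩ * of ⟨t⟩ with c 1 * c 0
  have hc0 : c 0 = PresentedGroup.of ⟨s, simple_mem_reflSet cs i⟩ := by
    apply pbc_of_eq
    show u ^ 0 * s = s
    rw [pow_zero, one_mul]
  have hc1 : c 1 = PresentedGroup.of (conjAct cs s ⟨t, simple_mem_reflSet cs j⟩) := by
    apply pbc_of_eq
    show u ^ 1 * s = s * t * s⁻¹
    rw [pow_one, hsinv, hu_def]
  have hmain : PresentedGroup.of (⟨s, simple_mem_reflSet cs i⟩ : reflSet cs) *
      PresentedGroup.of (⟨t, simple_mem_reflSet cs j⟩ : reflSet cs) = c 1 * c 0 := by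
    rw [hc0, hc1,
      ← pbc_conj cs ⟨s, simple_mem_reflSet cs i⟩ ⟨t, simple_mem_reflSet cs j⟩,
      inv_mul_cancel_right]
  have hcm : c (M i j) = c 0 := by
    apply pbc_of_eq
    show u ^ M i j * s = u ^ 0 * s
    rw [pow_zero, hu_def, cs.simple_mul_simple_pow i j]
  rw [hmain, hL2, hcm, hsq 0]

/-- The lifting homomorphism `W →* PresentedGroup`. -/
private noncomputable def pbcPhi : W →* PresentedGroup (pbcRels cs) :=
  CoxeterSystem.lift cs ⟨fun i => PresentedGroup.of ⟨cs.simple i, simple_mem_reflSet cs i⟩,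
    fun i j => pbc_braid cs i j⟩

private lemma pbcPhi_simple (i : B) :
    pbcPhi cs (cs.simple i) = PresentedGroup.of ⟨cs.simple i, simple_mem_reflSet cs i⟩ :=
  CoxeterSystem.lift_apply_simple cs _ i

private lemma pbcPhi_conj (w : W) :
    ∀ t : reflSet cs, pbcPhi cs w * PresentedGroup.of t * (pbcPhi cs w)⁻¹ =
      PresentedGroup.of (conjAct cs w t) := by
  induction w using cs.simple_induction with
  | simple i =>
      intro t
      rw [pbcPhi_simple]
      exact pbc_conj cs ⟨cs.simple i, simple_mem_reflSet cs i⟩ t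
  | one =>
      intro t
      rw [map_one, one_mul, inv_one, mul_one]
      apply pbc_of_eq
      show t.1 = 1 * t.1 * 1⁻¹
      group
  | mul w w' hw hw' =>
      intro t
      rw [map_mul, mul_inv_rev]
      calc pbcPhi cs w * pbcPhi cs w' * PresentedGroup.of t *
            ((pbcPhi cs w')⁻¹ * (pbcPhi cs w)⁻¹)
          = pbcPhi cs w * (pbcPhi cs w' * PresentedGroup.of t * (pbcPhi cs w')⁻¹) *
            (pbcPhi cs w)⁻¹ := by group
        _ = pbcPhi cs w * PresentedGroup.of (conjAct cs w' t) * (pbcPhi cs w)⁻¹ := by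
            rw [hw' t]
        _ = PresentedGroup.of (conjAct cs w (conjAct cs w' t)) := hw _
        _ = PresentedGroup.of (conjAct cs (w * w') t) := by
            apply pbc_of_eq
            show w * (w' * t.1 * w'⁻¹) * w⁻¹ = (w * w') * t.1 * (w * w')⁻¹
            group

private lemma pbcPhi_val (t : reflSet cs) : pbcPhi cs t.1 = PresentedGroup.of t := by
  obtain ⟨x, hx⟩ := t
  obtain ⟨w, i, rfl⟩ := hx
  show pbcPhi cs (w * cs.simple i * w⁻¹) = _
  rw [map_mul, map_mul, map_inv, pbcPhi_simple,
    pbcPhi_conj cs w ⟨cs.simple i, simple_mem_reflSet cs i⟩]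
  apply pbc_of_eq
  rfl

end Aux

/-- A Coxeter group has the presentation by conjugation with respect to
its root set `T` of reflections (with `r_t = t` and `W` acting by conjugation):
the canonical surjection from the presented group onto `W` is injective. -/
theorem coxeter_presentation_by_conjugation {B W : Type*} [Group W] {M : CoxeterMatrix B}
    (cs : CoxeterSystem M W)
    (h : ∀ x ∈ conjRels (Subtype.val : reflSet cs → W) (fun w t => conjAct cs w t),
      FreeGroup.lift (Subtype.val : reflSet cs → W) x = 1) :
    Function.Injective (PresentedGroup.toGroup h) := by
  have hcomp : (pbcPhi cs).comp (PresentedGroup.toGroup h) = MonoidHom.id _ := by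
    apply PresentedGroup.ext
    intro t
    rw [MonoidHom.comp_apply, MonoidHom.id_apply, PresentedGroup.toGroup.of]
    exact pbcPhi_val cs t
  have key : ∀ x, pbcPhi cs (PresentedGroup.toGroup h x) = x := by
    intro x
    calc pbcPhi cs (PresentedGroup.toGroup h x)
        = ((pbcPhi cs).comp (PresentedGroup.toGroup h)) x := rfl
      _ = x := by rw [hcomp]; rfl
  intro a b hab
  have := congrArg (pbcPhi cs) hab
  rwa [key a, key b] at this
end

section
/- Let V = ℝ⁵ with the symmetric bilinear form whose matrix with respect to the standard basis has 1 in the entries (1,4),(4,1),(2,5),(5,2),(3,3) and 0 elsewhere. Let α₁ = (0,0,1,0,0), α₂ = (1,0,1,0,0), α₃ = (0,1,1,0,0) and let r_i be the reflection r_i(v) = v − 2((v,α_i)/(α_i,α_i)) α_i. Then r₁r₂r₃r₁r₂r₃r₂r₁r₃r₂r₁r₃ = 1. -/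
/-- The symmetric bilinear form on `ℝ⁵` with matrix entries `1` at
`(1,4), (4,1), (2,5), (5,2), (3,3)` (1-indexed) and `0` elsewhere. -/
def form5 (v u : Fin 5 → ℝ) : ℝ :=
  v 0 * u 3 + v 3 * u 0 + v 1 * u 4 + v 4 * u 1 + v 2 * u 2

/-- The reflection associated to an anisotropic vector `α`:
`v ↦ v − 2 (v,α)/(α,α) · α`. -/
noncomputable def refl5 (α : Fin 5 → ℝ) (v : Fin 5 → ℝ) : Fin 5 → ℝ :=
  v - (2 * form5 v α / form5 α α) • α


lemma r1_eq (v : Fin 5 → ℝ) : refl5 ![0,0,1,0,0] v = ![v 0, v 1, -v 2, v 3, v 4] := by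
  funext i
  fin_cases i <;>
    simp [refl5, form5, Matrix.cons_val_zero, Matrix.cons_val_one, Matrix.head_cons] <;> ring

lemma r2_eq (v : Fin 5 → ℝ) :
    refl5 ![1,0,1,0,0] v = ![v 0 - 2*v 3 - 2*v 2, v 1, -v 2 - 2*v 3, v 3, v 4] := by
  funext i
  fin_cases i <;>
    simp [refl5, form5, Matrix.cons_val_zero, Matrix.cons_val_one, Matrix.head_cons] <;> ring

lemma r3_eq (v : Fin 5 → ℝ) :
    refl5 ![0,1,1,0,0] v = ![v 0, v 1 - 2*v 4 - 2*v 2, -v 2 - 2*v 4, v 3, v 4] := by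
  funext i
  fin_cases i <;>
    simp [refl5, form5, Matrix.cons_val_zero, Matrix.cons_val_one, Matrix.head_cons] <;> ring


lemma a_eq (v : Fin 5 → ℝ) :
    refl5 ![0,0,1,0,0] (refl5 ![1,0,1,0,0] (refl5 ![0,1,1,0,0] v)) =
      ![v 0 + 2*v 2 - 2*v 3 + 4*v 4, v 1 - 2*v 2 - 2*v 4, -v 2 + 2*v 3 - 2*v 4, v 3, v 4] := by
  rw [r3_eq, r2_eq, r1_eq]
  funext i
  fin_cases i <;> simp <;> ring

lemma b_eq (v : Fin 5 → ℝ) :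
    refl5 ![1,0,1,0,0] (refl5 ![0,0,1,0,0] (refl5 ![0,1,1,0,0] v)) =
      ![v 0 - 2*v 2 - 2*v 3 - 4*v 4, v 1 - 2*v 2 - 2*v 4, -v 2 - 2*v 3 - 2*v 4, v 3, v 4] := by
  rw [r3_eq, r1_eq, r2_eq]
  funext i
  fin_cases i <;> simp <;> ring

set_option maxHeartbeats 1000000 in
/-- With `α₁ = (0,0,1,0,0)`, `α₂ = (1,0,1,0,0)`, `α₃ = (0,1,1,0,0)` and
`r_i` the associated reflections, one has `r₁r₂r₃r₁r₂r₃r₂r₁r₃r₂r₁r₃ = 1`. -/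
theorem refl5_relation :
    ∀ v : Fin 5 → ℝ,
      refl5 ![0,0,1,0,0] (refl5 ![1,0,1,0,0] (refl5 ![0,1,1,0,0]
        (refl5 ![0,0,1,0,0] (refl5 ![1,0,1,0,0] (refl5 ![0,1,1,0,0]
          (refl5 ![1,0,1,0,0] (refl5 ![0,0,1,0,0] (refl5 ![0,1,1,0,0]
            (refl5 ![1,0,1,0,0] (refl5 ![0,0,1,0,0] (refl5 ![0,1,1,0,0] v))))))))))) = v := by
  intro v
  rw [b_eq, b_eq, a_eq, a_eq]
  funext i
  fin_cases i <;> simp <;> ring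
end

section
/- Let V = ℝ⁵ with the symmetric bilinear form of the previous setting, and R^× = {(z₁,z₂,z₃,0,0) : z₁,z₂ ∈ ℤ, z₃ ∈ {1,−1}, z₁z₂ even}. For any two roots α, β ∈ R^× with r_α ≠ r_β, the product r_α r_β of the associated reflections has infinite order. -/
/-- The set of anisotropic roots
`R^× = {(z₁,z₂,z₃,0,0) : z₁,z₂ ∈ ℤ, z₃ ∈ {1,−1}, z₁z₂ even}`. -/
def Rx5 : Set (Fin 5 → ℝ) :=
  {v | ∃ z₁ z₂ z₃ : ℤ, (z₃ = 1 ∨ z₃ = -1) ∧ Even (z₁ * z₂) ∧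
    v = ![(z₁ : ℝ), (z₂ : ℝ), (z₃ : ℝ), 0, 0]}

lemma refl5_apply (a₁ a₂ a₃ : ℝ) (h : a₃ * a₃ = 1) (v : Fin 5 → ℝ) :
    refl5 ![a₁,a₂,a₃,0,0] v =
      fun i => v i - (2*(v 3*a₁ + v 4*a₂ + v 2*a₃)) * (![a₁,a₂,a₃,0,0] i) := by
  funext i
  simp only [refl5, Pi.sub_apply, Pi.smul_apply, smul_eq_mul, form5,
    Matrix.cons_val_zero, Matrix.cons_val_one, Matrix.head_cons,
    Matrix.cons_val_two, Matrix.tail_cons, Matrix.cons_val_three,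
    Matrix.cons_val_four]
  rw [show a₁*0+0*a₁+a₂*0+0*a₂+a₃*a₃ = 1 by linarith]
  ring

lemma iter_coord (a₁ a₂ a₃ b₁ b₂ b₃ : ℝ) (ha : a₃ * a₃ = 1) (hb : b₃ * b₃ = 1)
    (p q : ℝ) (n : ℕ) :
    ((refl5 ![a₁,a₂,a₃,0,0] ∘ refl5 ![b₁,b₂,b₃,0,0])^[n] ![0,0,0,p,q]) 2
        = n * (2*(b₃*(b₁*p + b₂*q)) - 2*(a₃*(a₁*p + a₂*q))) ∧
    ((refl5 ![a₁,a₂,a₃,0,0] ∘ refl5 ![b₁,b₂,b₃,0,0])^[n] ![0,0,0,p,q]) 3 = p ∧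
    ((refl5 ![a₁,a₂,a₃,0,0] ∘ refl5 ![b₁,b₂,b₃,0,0])^[n] ![0,0,0,p,q]) 4 = q := by
  induction n with
  | zero => simp
  | succ n ih =>
    obtain ⟨h2, h3, h4⟩ := ih
    rw [Function.iterate_succ_apply']
    set w := (refl5 ![a₁,a₂,a₃,0,0] ∘ refl5 ![b₁,b₂,b₃,0,0])^[n] ![0,0,0,p,q] with hw
    simp only [Function.comp_apply, refl5_apply _ _ _ hb, refl5_apply _ _ _ ha]
    simp only [Matrix.cons_val_zero, Matrix.cons_val_one, Matrix.head_cons,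
      Matrix.cons_val_two, Matrix.tail_cons, Matrix.cons_val_three, Matrix.cons_val_four]
    push_cast
    refine ⟨?_, ?_, ?_⟩
    · rw [h2, h3, h4]
      linear_combination (2*(2*(p*b₁+q*b₂+(n:ℝ)*(2*(b₃*(b₁*p+b₂*q)) - 2*(a₃*(a₁*p+a₂*q)))*b₃))*b₃
          - 2*(n:ℝ)*(2*(b₃*(b₁*p+b₂*q)) - 2*(a₃*(a₁*p+a₂*q))))*ha
        + 2*(n:ℝ)*(2*(b₃*(b₁*p+b₂*q)) - 2*(a₃*(a₁*p+a₂*q)))*hb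
    · rw [h3]; ring
    · rw [h4]; ring

lemma main_real (a₁ a₂ a₃ b₁ b₂ b₃ : ℝ) (ha : a₃ * a₃ = 1) (hb : b₃ * b₃ = 1)
    (hne : refl5 ![a₁,a₂,a₃,0,0] ≠ refl5 ![b₁,b₂,b₃,0,0]) (n : ℕ) (hn : n ≠ 0) :
    (refl5 ![a₁,a₂,a₃,0,0] ∘ refl5 ![b₁,b₂,b₃,0,0])^[n] ≠ id := by
  intro hid
  have key : ∀ p q : ℝ,
      (n : ℝ) * (2*(b₃*(b₁*p + b₂*q)) - 2*(a₃*(a₁*p + a₂*q))) = 0 := by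
    intro p q
    have h := congrFun (congrFun hid ![0,0,0,p,q]) 2
    rw [(iter_coord a₁ a₂ a₃ b₁ b₂ b₃ ha hb p q n).1] at h
    simpa using h
  have hncast : (n : ℝ) ≠ 0 := Nat.cast_ne_zero.mpr hn
  have h1 : b₃ * b₁ = a₃ * a₁ := by
    have := key 1 0
    have := mul_eq_zero.mp this
    rcases this with h | h
    · exact absurd h hncast
    · linarith
  have h2 : b₃ * b₂ = a₃ * a₂ := by
    have := key 0 1
    have := mul_eq_zero.mp this
    rcases this with h | h
    · exact absurd h hncast
    · linarith
  apply hne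
  have hb1 : b₁ = b₃ * a₃ * a₁ := by linear_combination b₃ * h1 - b₁ * hb
  have hb2 : b₂ = b₃ * a₃ * a₂ := by linear_combination b₃ * h2 - b₂ * hb
  subst hb1; subst hb2
  funext v
  rw [refl5_apply _ _ _ ha, refl5_apply _ _ _ hb]
  funext i
  fin_cases i
  · simp
    linear_combination (-(2*(v 3)*a₁^2 + 2*a₁*(v 4)*a₂)*b₃^2)*ha
      + (-(2*(v 3)*a₁^2 + 2*a₁*(v 4)*a₂) - 2*a₁*(v 2)*a₃)*hb
  · simp
    linear_combination (-(2*(v 3)*a₁*a₂ + 2*(v 4)*a₂^2)*b₃^2)*ha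
      + (-(2*(v 3)*a₁*a₂ + 2*(v 4)*a₂^2) - 2*a₂*(v 2)*a₃)*hb
  · simp
    linear_combination (2*(v 2))*ha
      + (-2*(v 3)*a₁*a₃ - 2*(v 4)*a₂*a₃ - 2*(v 2))*hb
  · simp
  · simp

/-- For any two roots `α, β ∈ R^×` with `r_α ≠ r_β`, the product
`r_α ∘ r_β` has infinite order. -/
theorem refl5_product_infinite_order :
    ∀ α ∈ Rx5, ∀ β ∈ Rx5, refl5 α ≠ refl5 β →
      ∀ n : ℕ, n ≠ 0 → (refl5 α ∘ refl5 β)^[n] ≠ id := by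
  rintro α ⟨x₁, x₂, x₃, hx3, -, rfl⟩ β ⟨y₁, y₂, y₃, hy3, -, rfl⟩ hne n hn
  have ha : (x₃ : ℝ) * (x₃ : ℝ) = 1 := by
    rcases hx3 with rfl | rfl <;> norm_num
  have hb : (y₃ : ℝ) * (y₃ : ℝ) = 1 := by
    rcases hy3 with rfl | rfl <;> norm_num
  exact main_real _ _ _ _ _ _ ha hb hne n hn
end

section
/- Let R be a root set with Weyl group W. If W has the presentation by conjugation with respect to R, then R is minimal: there is no root γ ∈ R such that the reflections associated to the elements of R_γ := R \ {α : ∃ w ∈ W, r_{w.γ} = r_α} generate W. -/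
/-- Let `R` be a root set with Weyl group `W`. If `W` has the
presentation by conjugation with respect to `R` (the canonical surjection from the
presented group onto `W` is injective), then `R` is minimal: there is no `γ ∈ R`
such that the reflections associated to `R_γ = R \ {α : ∃ w, r (w • γ) = r α}`
generate `W`. -/
theorem presentation_by_conjugation_implies_minimal {W R : Type*} [Group W] [MulAction W R]
    (r : R → W)
    (hinv : ∀ α : R, r α * r α = 1)
    (hgen : Subgroup.closure (Set.range r) = ⊤)
    (hconj : ∀ α β : R, r α * r β * (r α)⁻¹ = r ((r α) • β))
    (hpc : ∀ h : (∀ x ∈ conjRels r (fun w β => w • β), FreeGroup.lift r x = 1),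
      Function.Injective (PresentedGroup.toGroup h)) :
    ¬ ∃ γ : R,
      Subgroup.closure (r '' {α : R | ¬ ∃ w : W, r (w • γ) = r α}) = ⊤ := by
  classical
  rintro ⟨γ, hγ⟩
  -- the relations hold in W
  have hrel : ∀ x ∈ conjRels r (fun w β => w • β), FreeGroup.lift r x = 1 := by
    rintro x ((⟨α, β, hab, rfl⟩ | ⟨α, rfl⟩) | ⟨α, β, rfl⟩)
    · simp [hab]
    · simpa using hinv α
    · have : FreeGroup.lift r (FreeGroup.of α * FreeGroup.of β * (FreeGroup.of α)⁻¹ *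
          (FreeGroup.of ((fun (w : W) (β : R) => w • β) (r α) β))⁻¹)
          = (r α * r β * (r α)⁻¹) * (r ((r α) • β))⁻¹ := by
        simp [mul_assoc]
      rw [this, hconj, mul_inv_cancel]
  set π : PresentedGroup (conjRels r (fun w β => w • β)) →* W := PresentedGroup.toGroup hrel with hπ
  have hπof : ∀ α : R, π (PresentedGroup.of α) = r α := fun α => PresentedGroup.toGroup.of hrel
  have hπsur : Function.Surjective π := by
    rw [← MonoidHom.range_eq_top, eq_top_iff, ← hgen, Subgroup.closure_le]
    rintro x ⟨α, rfl⟩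
    exact ⟨PresentedGroup.of α, hπof α⟩
  -- the sign morphism
  have hiff : ∀ (α β : R), (∃ w : W, r (w • γ) = r ((r α) • β)) ↔ (∃ w : W, r (w • γ) = r β) := by
    intro α β
    constructor
    · rintro ⟨w, hw⟩
      refine ⟨r α * w, ?_⟩
      rw [mul_smul, ← hconj, hw, hconj, ← mul_smul, hinv, one_smul]
    · rintro ⟨w, hw⟩
      refine ⟨r α * w, ?_⟩
      rw [mul_smul, ← hconj, hw, hconj]
  set f : R → ℤˣ := fun α => if ∃ w : W, r (w • γ) = r α then -1 else 1 with hfdef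
  have hfeq : ∀ α β : R, r α = r β → f α = f β := by
    intro α β h
    simp only [hfdef]
    rw [h]
  have hf : ∀ x ∈ conjRels r (fun w β => w • β), FreeGroup.lift f x = 1 := by
    rintro x ((⟨α, β, hab, rfl⟩ | ⟨α, rfl⟩) | ⟨α, β, rfl⟩)
    · simp [hfeq α β hab]
    · simpa using Int.units_mul_self (f α)
    · have h3 : f ((r α) • β) = f β := by
        simp only [hfdef]
        exact if_congr (hiff α β) rfl rfl
      have : FreeGroup.lift f (FreeGroup.of α * FreeGroup.of β * (FreeGroup.of α)⁻¹ *
          (FreeGroup.of ((fun (w : W) (β : R) => w • β) (r α) β))⁻¹)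
          = (f α * f β * (f α)⁻¹) * (f ((r α) • β))⁻¹ := by
        simp [mul_assoc]
      rw [this, h3, mul_comm (f α) (f β)]
      group
  set φ : PresentedGroup (conjRels r (fun w β => w • β)) →* ℤˣ := PresentedGroup.toGroup hf with hφ
  have hφof : ∀ α : R, φ (PresentedGroup.of α) = f α := fun α => PresentedGroup.toGroup.of hf
  -- the subgroup generated by the images of R_γ
  set K : Subgroup (PresentedGroup (conjRels r (fun w β => w • β))) :=
    Subgroup.closure (PresentedGroup.of '' {α : R | ¬ ∃ w : W, r (w • γ) = r α}) with hK
  have hmapK : Subgroup.map π K = ⊤ := by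
    rw [hK, MonoidHom.map_closure, ← hγ]
    congr 1
    rw [← Set.image_comp]
    exact Set.image_congr fun a _ => hπof a
  have hKtop : K = ⊤ := by
    apply Subgroup.map_injective (hpc hrel)
    rw [hmapK, ← MonoidHom.range_eq_map, MonoidHom.range_eq_top_of_surjective π hπsur]
  have hle : K ≤ φ.ker := by
    rw [hK, Subgroup.closure_le]
    rintro x ⟨α, hα, rfl⟩
    simp only [SetLike.mem_coe, MonoidHom.mem_ker, hφof α, hfdef]
    exact if_neg hα
  have h1 : φ (PresentedGroup.of γ) = 1 := hle (hKtop ▸ Subgroup.mem_top _)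
  have hfγ : f γ = -1 := if_pos ⟨1, by rw [one_smul]⟩
  rw [hφof γ, hfγ] at h1
  exact absurd h1 (by decide)
end

section
/- Let R be a root set with Weyl group W and γ ∈ R. The map ψ : R → ℤ/2 sending α to 1 if α ∈ R_γ := R \ {β : ∃ w ∈ W, r_{w.γ} = r_β} and to 0 otherwise extends to a group homomorphism from the presented group Ŵ (presentation by conjugation) to ℤ/2. -/
open Classical

/-- Let `R` be a root set with Weyl group `W` and `γ ∈ R`. The map
`ψ : R → ℤ/2` sending `α` to `1` if `α ∈ R_γ = R \ {β : ∃ w, r (w • γ) = r β}` and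
to `0` otherwise extends to a group homomorphism from the presented group `Ŵ`
(presentation by conjugation) to `ℤ/2`. -/
theorem psi_extends_to_presented_group {W R : Type*} [Group W] [MulAction W R]
    (r : R → W)
    (hinv : ∀ α : R, r α * r α = 1)
    (hgen : Subgroup.closure (Set.range r) = ⊤)
    (hconj : ∀ α β : R, r α * r β * (r α)⁻¹ = r ((r α) • β))
    (γ : R) :
    ∃ φ : PresentedGroup (conjRels r (fun w β => w • β)) →* Multiplicative (ZMod 2),
      ∀ α : R, φ (PresentedGroup.of α) =
        Multiplicative.ofAdd (if ∃ w : W, r (w • γ) = r α then 0 else 1) := by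
  set f : R → Multiplicative (ZMod 2) := fun α =>
    Multiplicative.ofAdd (if ∃ w : W, r (w • γ) = r α then 0 else 1) with hf
  have key : ∀ α β : R, (∃ w : W, r (w • γ) = r β) → ∃ w : W, r (w • γ) = r ((r α) • β) := by
    intro α β ⟨w, hw⟩
    exact ⟨r α * w, by rw [mul_smul, ← hconj, hw]; exact hconj α β⟩
  have key2 : ∀ α β : R, (∃ w : W, r (w • γ) = r ((r α) • β)) → ∃ w : W, r (w • γ) = r β := by
    intro α β ⟨w, hw⟩
    refine ⟨r α * w, ?_⟩
    have h1 : (r α)⁻¹ = r α := by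
      rw [eq_comm, eq_inv_iff_mul_eq_one, hinv]
    rw [mul_smul, ← hconj, hw, ← hconj, ← mul_assoc, ← mul_assoc, h1, hinv, one_mul,
      mul_assoc, hinv, mul_one]
  have hrel : ∀ x ∈ conjRels r (fun (w : W) (β : R) => w • β), FreeGroup.lift f x = 1 := by
    rintro x ((⟨α, β, hab, rfl⟩ | ⟨α, rfl⟩) | ⟨α, β, rfl⟩)
    · simp only [map_mul, map_inv, FreeGroup.lift_apply_of, hf]
      have : (∃ w : W, r (w • γ) = r α) ↔ ∃ w : W, r (w • γ) = r β := by rw [hab]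
      simp [this]
    · simp only [map_mul, FreeGroup.lift_apply_of, hf]
      by_cases h : ∃ w : W, r (w • γ) = r α <;> simp [h, ← ofAdd_add] <;> decide
    · simp only [map_mul, map_inv, FreeGroup.lift_apply_of, hf]
      have : (∃ w : W, r (w • γ) = r β) ↔ ∃ w : W, r (w • γ) = r ((r α) • β) :=
        ⟨key α β, key2 α β⟩
      simp only [← this]
      by_cases h : ∃ w : W, r (w • γ) = r α <;>
        by_cases h2 : ∃ w : W, r (w • γ) = r β <;> simp [h, h2] <;> decide
  refine ⟨PresentedGroup.toGroup hrel, fun α => ?_⟩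
  exact PresentedGroup.toGroup.of hrel
end

section
/- Let R be a minimal root set with Weyl group W, and let R̃ ⊆ R be W-invariant with W_{R̃} the subgroup generated by {r_α : α ∈ R̃}. Suppose that for every α ∈ R \ R̃ and every w ∈ W there is w' ∈ W_{R̃} with r_{w.α} = r_{w'.α}. If W_{R̃} has the presentation by conjugation with respect to R̃, then W has the presentation by conjugation with respect to R. -/
private theorem pairwise_commute_of_forall {M : Type*} [Monoid M] :
    ∀ (l : List M), (∀ x ∈ l, ∀ y : M, Commute x y) → l.Pairwise Commute
  | [], _ => List.Pairwise.nil
  | a :: t, h => List.Pairwise.cons (fun b _ => h a (List.mem_cons_self) b)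
      (pairwise_commute_of_forall t (fun x hx => h x (List.mem_cons_of_mem a hx)))

set_option maxHeartbeats 1000000 in
/-- Let `R` be a minimal root set with Weyl group `W`, `R̃ ⊆ R` a
`W`-invariant subset, `W_R̃` the subgroup generated by the reflections of `R̃`, and
suppose that for every `α ∈ R \ R̃` and `w ∈ W` there is `w' ∈ W_R̃` with
`r (w • α) = r (w' • α)`. If `W_R̃` has the presentation by conjugation with respect
to `R̃`, then `W` has the presentation by conjugation with respect to `R`. -/
theorem sub_presentation_by_conjugation_implies {W R : Type*} [Group W] [MulAction W R]
    (r : R → W)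
    (hinv : ∀ α : R, r α * r α = 1)
    (hgen : Subgroup.closure (Set.range r) = ⊤)
    (hconj : ∀ α β : R, r α * r β * (r α)⁻¹ = r ((r α) • β))
    (hmin : ¬ ∃ γ : R,
      Subgroup.closure (r '' {α : R | ¬ ∃ w : W, r (w • γ) = r α}) = ⊤)
    (Rt : Set R)
    (hRtinv : ∀ (w : W) (α : R), α ∈ Rt → w • α ∈ Rt)
    (hmatch : ∀ α : R, α ∉ Rt → ∀ w : W,
      ∃ w' ∈ Subgroup.closure (r '' Rt), r (w • α) = r (w' • α))
    (hsubpc : ∀ h : (∀ x ∈ conjRels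
        (fun β : Rt => (⟨r β.1, Subgroup.subset_closure ⟨β.1, β.2, rfl⟩⟩ :
          Subgroup.closure (r '' Rt)))
        (fun w' β => (⟨(w' : W) • (β : R), hRtinv w' β β.2⟩ : Rt)),
        FreeGroup.lift (fun β : Rt => (⟨r β.1, Subgroup.subset_closure ⟨β.1, β.2, rfl⟩⟩ :
          Subgroup.closure (r '' Rt))) x = 1),
      Function.Injective (PresentedGroup.toGroup h)) :
    ∀ h' : (∀ x ∈ conjRels r (fun w β => w • β), FreeGroup.lift r x = 1),
      Function.Injective (PresentedGroup.toGroup h') := by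
  classical
  intro h'
  set π := PresentedGroup.toGroup h' with hπdef
  -- elements of the relation set are trivial in the presented group
  have hmk : ∀ x ∈ conjRels r (fun w β => w • β),
      (PresentedGroup.mk (conjRels r (fun w β => w • β)) x) = 1 := fun x hx =>
    (QuotientGroup.eq_one_iff x).mpr (Subgroup.subset_normalClosure hx)
  have F2 : ∀ α β : R, r α = r β →
      (PresentedGroup.of α : PresentedGroup (conjRels r (fun w β => w • β))) =
        PresentedGroup.of β := by
    intro α β hab
    have h0 := hmk _ (Or.inl (Or.inl ⟨α, β, hab, rfl⟩))
    rw [map_mul, map_inv] at h0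
    exact mul_inv_eq_one.mp h0
  have F1 : ∀ α : R,
      (PresentedGroup.of α : PresentedGroup (conjRels r (fun w β => w • β))) *
        PresentedGroup.of α = 1 := by
    intro α
    have h0 := hmk _ (Or.inl (Or.inr ⟨α, rfl⟩))
    rwa [map_mul] at h0
  have einv : ∀ α : R,
      (PresentedGroup.of α : PresentedGroup (conjRels r (fun w β => w • β)))⁻¹ =
        PresentedGroup.of α := fun α => inv_eq_of_mul_eq_one_right (F1 α)
  have F3 : ∀ α β : R,
      (PresentedGroup.of α : PresentedGroup (conjRels r (fun w β => w • β))) *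
        PresentedGroup.of β * (PresentedGroup.of α)⁻¹ = PresentedGroup.of (r α • β) := by
    intro α β
    have h0 := hmk _ (Or.inr ⟨α, β, rfl⟩)
    rw [map_mul, map_mul, map_mul, map_inv, map_inv] at h0
    exact mul_inv_eq_one.mp h0
  have Fπ : ∀ α : R, π (PresentedGroup.of α) = r α := by
    intro α
    rw [hπdef]
    exact PresentedGroup.toGroup.of h'
  have memtop : ∀ g : PresentedGroup (conjRels r (fun w β => w • β)),
      g ∈ Subgroup.closure (Set.range
        (PresentedGroup.of : R → PresentedGroup (conjRels r (fun w β => w • β)))) := by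
    intro g
    rw [PresentedGroup.closure_range_of]
    exact Subgroup.mem_top g
  -- conjugation formula in the presented group
  have F6 : ∀ g : PresentedGroup (conjRels r (fun w β => w • β)), ∀ α : R,
      g * PresentedGroup.of α * g⁻¹ = PresentedGroup.of (π g • α) := by
    intro g
    have hg := memtop g
    induction hg using Subgroup.closure_induction with
    | mem x hx =>
      obtain ⟨β, rfl⟩ := hx
      intro α
      rw [Fπ β]
      exact F3 β α
    | one => intro α; rw [map_one, one_smul, one_mul, inv_one, mul_one]
    | mul x y hx hy ihx ihy =>
      intro α
      rw [map_mul, mul_smul, ← ihx (π y • α), ← ihy α]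
      group
    | inv x hx ih =>
      intro α
      have h1 := ih ((π x)⁻¹ • α)
      rw [smul_inv_smul] at h1
      rw [map_inv, ← h1]
      group
  -- conjugation formula in W
  have W6 : ∀ w : W, ∀ α : R, w * r α * w⁻¹ = r (w • α) := by
    intro w
    have hw : w ∈ Subgroup.closure (Set.range r) := by rw [hgen]; exact Subgroup.mem_top w
    induction hw using Subgroup.closure_induction with
    | mem x hx => obtain ⟨β, rfl⟩ := hx; intro α; exact hconj β α
    | one => intro α; rw [one_smul, one_mul, inv_one, mul_one]
    | mul x y hx hy ihx ihy =>
      intro α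
      rw [mul_smul, ← ihx (y • α), ← ihy α]
      group
    | inv x hx ih =>
      intro α
      have h1 := ih (x⁻¹ • α)
      rw [smul_inv_smul] at h1
      rw [← h1]
      group
  -- the subgroup generated by the generators from Rt
  set H : Subgroup (PresentedGroup (conjRels r (fun w β => w • β))) :=
    Subgroup.closure (Set.range (fun β : Rt =>
      (PresentedGroup.of β.1 : PresentedGroup (conjRels r (fun w β => w • β))))) with hHdef
  have HgenMem : ∀ β : R, β ∈ Rt →
      (PresentedGroup.of β : PresentedGroup (conjRels r (fun w β => w • β))) ∈ H := by
    intro β hβ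
    rw [hHdef]
    exact Subgroup.subset_closure ⟨⟨β, hβ⟩, rfl⟩
  have Hconj : ∀ g x : PresentedGroup (conjRels r (fun w β => w • β)),
      x ∈ H → g * x * g⁻¹ ∈ H := by
    intro g x hx
    induction hx using Subgroup.closure_induction with
    | mem y hy =>
      obtain ⟨β, rfl⟩ := hy
      rw [F6 g β.1]
      exact HgenMem _ (hRtinv (π g) β.1 β.2)
    | one => simpa using one_mem H
    | mul a b ha hb iha ihb =>
      have h0 : g * (a * b) * g⁻¹ = (g * a * g⁻¹) * (g * b * g⁻¹) := by group
      rw [h0]; exact mul_mem iha ihb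
    | inv a ha iha =>
      have h0 : g * a⁻¹ * g⁻¹ = (g * a * g⁻¹)⁻¹ := by group
      rw [h0]; exact inv_mem iha
  haveI HN : H.Normal := ⟨fun x hx g => Hconj g x hx⟩
  have πH : ∀ x ∈ H, π x ∈ Subgroup.closure (r '' Rt) := by
    intro x hx
    induction hx using Subgroup.closure_induction with
    | mem y hy =>
      obtain ⟨β, rfl⟩ := hy
      rw [Fπ]
      exact Subgroup.subset_closure ⟨β.1, β.2, rfl⟩
    | one => rw [map_one]; exact one_mem _
    | mul a b ha hb iha ihb => rw [map_mul]; exact mul_mem iha ihb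
    | inv a ha iha => rw [map_inv]; exact inv_mem iha
  have πHsurj : ∀ w' ∈ Subgroup.closure (r '' Rt),
      ∃ x ∈ H, π x = w' := by
    intro w' hw'
    induction hw' using Subgroup.closure_induction with
    | mem y hy =>
      obtain ⟨β, hβ, rfl⟩ := hy
      exact ⟨PresentedGroup.of β, HgenMem β hβ, Fπ β⟩
    | one => exact ⟨1, one_mem _, map_one _⟩
    | mul a b ha hb iha ihb =>
      obtain ⟨x, hx, rfl⟩ := iha
      obtain ⟨y, hy, rfl⟩ := ihb
      exact ⟨x * y, mul_mem hx hy, map_mul _ _ _⟩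
    | inv a ha iha =>
      obtain ⟨x, hx, rfl⟩ := iha
      exact ⟨x⁻¹, inv_mem hx, map_inv _ _⟩
  -- generators whose class meets Rt lie in H
  have C1 : ∀ α : R, (α ∈ Rt ∨ ∃ (w : W) (β : R), β ∈ Rt ∧ r (w • α) = r β) →
      (PresentedGroup.of α : PresentedGroup (conjRels r (fun w β => w • β))) ∈ H := by
    intro α hα
    rcases hα with hα | ⟨w, β, hβ, heq⟩
    · exact HgenMem α hα
    · by_cases hRt : α ∈ Rt
      · exact HgenMem α hRt
      · obtain ⟨w', hw', heq'⟩ := hmatch α hRt w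
        obtain ⟨x, hx, hπx⟩ := πHsurj w' hw'
        have h1 : (PresentedGroup.of (w' • α) :
            PresentedGroup (conjRels r (fun w β => w • β))) = PresentedGroup.of β :=
          F2 _ _ (heq'.symm.trans heq)
        have h2 : x * PresentedGroup.of α * x⁻¹ = PresentedGroup.of (w' • α) := by
          rw [F6, hπx]
        have h3 : (PresentedGroup.of α :
            PresentedGroup (conjRels r (fun w β => w • β))) =
            x⁻¹ * PresentedGroup.of β * x⁻¹⁻¹ := by
          rw [← h1, ← h2]; group
        rw [h3]
        exact Hconj x⁻¹ _ (HgenMem β hβ)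
  -- product of two class-equivalent generators lies in H
  have M : ∀ α β : R, (∃ w : W, r (w • α) = r β) →
      (PresentedGroup.of α : PresentedGroup (conjRels r (fun w β => w • β))) *
        PresentedGroup.of β ∈ H := by
    intro α β hab
    obtain ⟨w, hw⟩ := hab
    by_cases hRt : α ∈ Rt
    · have hα : (PresentedGroup.of α :
          PresentedGroup (conjRels r (fun w β => w • β))) ∈ H := HgenMem α hRt
      have hβ : (PresentedGroup.of β :
          PresentedGroup (conjRels r (fun w β => w • β))) ∈ H :=
        C1 β (Or.inr ⟨1, w • α, hRtinv w α hRt, by rw [one_smul]; exact hw.symm⟩)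
      exact mul_mem hα hβ
    · obtain ⟨w', hw', heq'⟩ := hmatch α hRt w
      obtain ⟨x, hx, hπx⟩ := πHsurj w' hw'
      have h0 : (PresentedGroup.of β :
          PresentedGroup (conjRels r (fun w β => w • β))) =
          PresentedGroup.of (w' • α) := F2 _ _ (hw.symm.trans heq')
      have h2 : x * PresentedGroup.of α * x⁻¹ = PresentedGroup.of (w' • α) := by
        rw [F6, hπx]
      have key : (PresentedGroup.of α :
          PresentedGroup (conjRels r (fun w β => w • β))) * PresentedGroup.of β =
          (PresentedGroup.of α * x * (PresentedGroup.of α)⁻¹) * x⁻¹ := by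
        rw [h0, ← h2, einv]
        group
      rw [key]
      exact mul_mem (Hconj _ _ hx) (inv_mem hx)
  -- the images of the generators in the quotient by H
  set xq : R → (PresentedGroup (conjRels r (fun w β => w • β)) ⧸ H) :=
    (fun α => QuotientGroup.mk (PresentedGroup.of α)) with hxqdef
  have central : ∀ (α : R) (t : PresentedGroup (conjRels r (fun w β => w • β)) ⧸ H),
      t * xq α * t⁻¹ = xq α := by
    intro α t
    obtain ⟨g, rfl⟩ := QuotientGroup.mk_surjective t
    rw [hxqdef]
    show QuotientGroup.mk g * QuotientGroup.mk (PresentedGroup.of α) *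
      (QuotientGroup.mk g)⁻¹ = QuotientGroup.mk (PresentedGroup.of α)
    rw [← QuotientGroup.mk_inv, ← QuotientGroup.mk_mul, ← QuotientGroup.mk_mul, F6 g α]
    by_cases hRt : α ∈ Rt
    · have e1 : (QuotientGroup.mk (PresentedGroup.of (π g • α)) :
          PresentedGroup (conjRels r (fun w β => w • β)) ⧸ H) = 1 :=
        (QuotientGroup.eq_one_iff _).mpr (HgenMem _ (hRtinv (π g) α hRt))
      have e2 : (QuotientGroup.mk (PresentedGroup.of α) :
          PresentedGroup (conjRels r (fun w β => w • β)) ⧸ H) = 1 :=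
        (QuotientGroup.eq_one_iff _).mpr (HgenMem _ hRt)
      rw [e1, e2]
    · obtain ⟨w', hw', heq'⟩ := hmatch α hRt (π g)
      obtain ⟨x, hx, hπx⟩ := πHsurj w' hw'
      have h0 : (PresentedGroup.of (π g • α) :
          PresentedGroup (conjRels r (fun w β => w • β))) =
          x * PresentedGroup.of α * x⁻¹ := by
        rw [F6, hπx]
        exact F2 _ _ heq'
      have e1 : (QuotientGroup.mk x :
          PresentedGroup (conjRels r (fun w β => w • β)) ⧸ H) = 1 :=
        (QuotientGroup.eq_one_iff _).mpr hx
      rw [h0, QuotientGroup.mk_mul, QuotientGroup.mk_mul, QuotientGroup.mk_inv, e1,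
        one_mul, inv_one, mul_one]
  have comm : ∀ (α : R) (t : PresentedGroup (conjRels r (fun w β => w • β)) ⧸ H),
      Commute (xq α) t := by
    intro α t
    have h0 := central α t
    show xq α * t = t * xq α
    conv_lhs => rw [← h0]
    group
  have xsq : ∀ α : R, xq α * xq α = 1 := by
    intro α
    rw [hxqdef]
    show QuotientGroup.mk (PresentedGroup.of α) * QuotientGroup.mk (PresentedGroup.of α) = 1
    rw [← QuotientGroup.mk_mul, F1, QuotientGroup.mk_one]
  have prodsq : ∀ l : List R, (l.map xq).prod * (l.map xq).prod = 1 := by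
    intro l
    induction l with
    | nil => simp
    | cons a t ih =>
      rw [List.map_cons, List.prod_cons]
      have hc : xq a * (t.map xq).prod = (t.map xq).prod * xq a := (comm a _).eq
      have h1 : (xq a * (t.map xq).prod) * (xq a * (t.map xq).prod) =
          xq a * ((t.map xq).prod * xq a) * (t.map xq).prod := by group
      rw [h1, ← hc]
      have h2 : xq a * (xq a * (t.map xq).prod) * (t.map xq).prod =
          (xq a * xq a) * ((t.map xq).prod * (t.map xq).prod) := by group
      rw [h2, xsq, ih, one_mul]
  have mklist : ∀ l : List R,
      (QuotientGroup.mk ((l.map (fun α =>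
        (PresentedGroup.of α : PresentedGroup (conjRels r (fun w β => w • β))))).prod) :
        PresentedGroup (conjRels r (fun w β => w • β)) ⧸ H) = (l.map xq).prod := by
    intro l
    induction l with
    | nil => simp
    | cons a t ih =>
      rw [List.map_cons, List.prod_cons, List.map_cons, List.prod_cons,
        QuotientGroup.mk_mul, ih]
  have πlist : ∀ l : List R,
      π ((l.map (fun α =>
        (PresentedGroup.of α : PresentedGroup (conjRels r (fun w β => w • β))))).prod) =
        (l.map r).prod := by
    intro l
    induction l with
    | nil => simp
    | cons a t ih =>
      rw [List.map_cons, List.prod_cons, List.map_cons, List.prod_cons, map_mul, ih, Fπ]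
  -- normalisation of lists of generators in the quotient
  have normList : ∀ l : List R,
      (∀ α ∈ l, ¬(α ∈ Rt ∨ ∃ (w : W) (β : R), β ∈ Rt ∧ r (w • α) = r β)) →
      ∃ l' : List R,
        (∀ α ∈ l', ¬(α ∈ Rt ∨ ∃ (w : W) (β : R), β ∈ Rt ∧ r (w • α) = r β)) ∧
        l'.Pairwise (fun a b => ¬ ∃ w : W, r (w • a) = r b) ∧
        (l.map xq).prod = (l'.map xq).prod := by
    intro l
    induction l with
    | nil => intro _; exact ⟨[], by simp, List.Pairwise.nil, rfl⟩
    | cons a t ih =>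
      intro hmem
      obtain ⟨t', ht'T, ht'pw, ht'prod⟩ := ih (fun α hα => hmem α (List.mem_cons_of_mem a hα))
      by_cases hex : ∃ b ∈ t', ∃ w : W, r (w • a) = r b
      · obtain ⟨b, hb, hab⟩ := hex
        refine ⟨t'.erase b, fun α hα => ht'T α (List.mem_of_mem_erase hα),
          ht'pw.sublist (List.erase_sublist), ?_⟩
        have hperm : List.Perm t' (b :: t'.erase b) := List.perm_cons_erase hb
        have hcomm : (t'.map xq).Pairwise Commute := by
          apply pairwise_commute_of_forall
          intro u hu v
          obtain ⟨α, _, rfl⟩ := List.mem_map.mp hu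
          exact comm α v
        have hp : (t'.map xq).prod = ((b :: t'.erase b).map xq).prod :=
          (hperm.map xq).prod_eq' hcomm
        rw [List.map_cons, List.prod_cons] at hp
        have h1 : xq a * xq b = 1 := by
          rw [hxqdef]
          show QuotientGroup.mk (PresentedGroup.of a) * QuotientGroup.mk (PresentedGroup.of b) = 1
          rw [← QuotientGroup.mk_mul]
          exact (QuotientGroup.eq_one_iff _).mpr (M a b hab)
        rw [List.map_cons, List.prod_cons, ht'prod, hp, ← mul_assoc, h1, one_mul]
      · push_neg at hex
        refine ⟨a :: t', ?_, List.Pairwise.cons (fun b hb => not_exists.mpr (hex b hb)) ht'pw, ?_⟩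
        · intro α hα
          rcases List.mem_cons.mp hα with rfl | h
          · exact hmem α (List.mem_cons_self)
          · exact ht'T α h
        · rw [List.map_cons, List.prod_cons, List.map_cons, List.prod_cons, ht'prod]
  -- decomposition of an arbitrary element
  have main : ∀ g : PresentedGroup (conjRels r (fun w β => w • β)),
      ∃ l : List R,
        (∀ α ∈ l, ¬(α ∈ Rt ∨ ∃ (w : W) (β : R), β ∈ Rt ∧ r (w • α) = r β)) ∧
        l.Pairwise (fun a b => ¬ ∃ w : W, r (w • a) = r b) ∧
        (QuotientGroup.mk g : PresentedGroup (conjRels r (fun w β => w • β)) ⧸ H) =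
          (l.map xq).prod := by
    intro g
    have hg := memtop g
    induction hg using Subgroup.closure_induction with
    | mem y hy =>
      obtain ⟨α, rfl⟩ := hy
      by_cases hT : α ∈ Rt ∨ ∃ (w : W) (β : R), β ∈ Rt ∧ r (w • α) = r β
      · exact ⟨[], by simp, List.Pairwise.nil,
          by simpa using (QuotientGroup.eq_one_iff _).mpr (C1 α hT)⟩
      · refine ⟨[α], by simpa using hT, List.pairwise_singleton _ _, ?_⟩
        rw [hxqdef]
        simp
    | one => exact ⟨[], by simp, List.Pairwise.nil, by simp⟩
    | mul a b ha hb iha ihb =>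
      obtain ⟨l₁, h1T, h1pw, h1prod⟩ := iha
      obtain ⟨l₂, h2T, h2pw, h2prod⟩ := ihb
      obtain ⟨l', hT', hpw', hprod'⟩ := normList (l₁ ++ l₂) (by
        intro α hα
        rcases List.mem_append.mp hα with h | h
        exacts [h1T α h, h2T α h])
      refine ⟨l', hT', hpw', ?_⟩
      rw [QuotientGroup.mk_mul, h1prod, h2prod, ← List.prod_append, ← List.map_append, hprod']
    | inv a ha iha =>
      obtain ⟨l, hT, hpw, hprod⟩ := iha
      refine ⟨l, hT, hpw, ?_⟩
      rw [QuotientGroup.mk_inv, hprod]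
      exact inv_eq_of_mul_eq_one_left (prodsq l)
  -- the key step: elements mapping into the subgroup generated by Rt lie in H
  have kerH : ∀ g : PresentedGroup (conjRels r (fun w β => w • β)),
      π g ∈ Subgroup.closure (r '' Rt) → g ∈ H := by
    intro g hg
    obtain ⟨l, hT, hpw, hprod⟩ := main g
    have hlnil : l = [] := by
      by_contra hne
      obtain ⟨γ, tl, rfl⟩ : ∃ γ tl, l = γ :: tl := by
        cases l with
        | nil => exact absurd rfl hne
        | cons a t => exact ⟨a, t, rfl⟩
      have hγT := hT γ (List.mem_cons_self)
      push_neg at hγT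
      -- the reflection subgroup avoiding the class of γ
      have hWtK : Subgroup.closure (r '' Rt) ≤
          Subgroup.closure (r '' {α : R | ¬ ∃ w : W, r (w • γ) = r α}) := by
        apply Subgroup.closure_le _ |>.mpr
        rintro _ ⟨β, hβ, rfl⟩
        exact Subgroup.subset_closure ⟨β, fun ⟨w, hw⟩ => hγT.2 w β hβ hw, rfl⟩
      have Kconj : ∀ u v : W,
          v ∈ Subgroup.closure (r '' {α : R | ¬ ∃ w : W, r (w • γ) = r α}) →
          u * v * u⁻¹ ∈ Subgroup.closure (r '' {α : R | ¬ ∃ w : W, r (w • γ) = r α}) := by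
        intro u v hv
        induction hv using Subgroup.closure_induction with
        | mem y hy =>
          obtain ⟨α, hα, rfl⟩ := hy
          rw [W6 u α]
          refine Subgroup.subset_closure ⟨u • α, ?_, rfl⟩
          rintro ⟨w, hw⟩
          apply hα
          refine ⟨u⁻¹ * w, ?_⟩
          rw [mul_smul, ← W6 u⁻¹ (w • γ), hw, ← W6 u α]
          group
        | one => simpa using one_mem _
        | mul a b ha hb iha ihb =>
          have h0 : u * (a * b) * u⁻¹ = (u * a * u⁻¹) * (u * b * u⁻¹) := by group
          rw [h0]; exact mul_mem iha ihb
        | inv a ha iha =>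
          have h0 : u * a⁻¹ * u⁻¹ = (u * a * u⁻¹)⁻¹ := by group
          rw [h0]; exact inv_mem iha
      -- decompose g along the list
      have hmkeq : (QuotientGroup.mk g :
          PresentedGroup (conjRels r (fun w β => w • β)) ⧸ H) =
          QuotientGroup.mk (((γ :: tl).map (fun α =>
            (PresentedGroup.of α : PresentedGroup (conjRels r (fun w β => w • β))))).prod) := by
        rw [hprod, mklist]
      have hh0 : (((γ :: tl).map (fun α =>
          (PresentedGroup.of α : PresentedGroup (conjRels r (fun w β => w • β))))).prod)⁻¹ *
          g ∈ H := QuotientGroup.eq.mp hmkeq.symm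
      have hπP : ((γ :: tl).map r).prod ∈
          Subgroup.closure (r '' {α : R | ¬ ∃ w : W, r (w • γ) = r α}) := by
        have h5 : ((γ :: tl).map r).prod =
            π g * (π ((((γ :: tl).map (fun α =>
              (PresentedGroup.of α : PresentedGroup (conjRels r (fun w β => w • β))))).prod)⁻¹ *
              g))⁻¹ := by
          rw [map_mul, map_inv, πlist]
          group
        rw [h5]
        exact hWtK (mul_mem hg (inv_mem (πH _ hh0)))
      have htl : (tl.map r).prod ∈
          Subgroup.closure (r '' {α : R | ¬ ∃ w : W, r (w • γ) = r α}) := by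
        apply Subgroup.list_prod_mem
        intro y hy
        obtain ⟨δ, hδ, rfl⟩ := List.mem_map.mp hy
        exact Subgroup.subset_closure ⟨δ, (List.pairwise_cons.mp hpw).1 δ hδ, rfl⟩
      have hrγ : r γ ∈ Subgroup.closure (r '' {α : R | ¬ ∃ w : W, r (w • γ) = r α}) := by
        have h6 : r γ = ((γ :: tl).map r).prod * ((tl.map r).prod)⁻¹ := by
          rw [List.map_cons, List.prod_cons]
          group
        rw [h6]
        exact mul_mem hπP (inv_mem htl)
      apply hmin
      refine ⟨γ, ?_⟩
      rw [eq_top_iff, ← hgen]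
      apply Subgroup.closure_le _ |>.mpr
      rintro _ ⟨α, rfl⟩
      by_cases hc : ∃ w : W, r (w • γ) = r α
      · obtain ⟨w, hw⟩ := hc
        rw [← hw, ← W6 w γ]
        exact Kconj w _ hrγ
      · exact Subgroup.subset_closure ⟨α, hc, rfl⟩
    rw [hlnil] at hprod
    simp only [List.map_nil, List.prod_nil] at hprod
    exact (QuotientGroup.eq_one_iff g).mp hprod
  -- the presentation by conjugation for the subgroup
  have hsub : (∀ x ∈ conjRels
      (fun β : Rt => (⟨r β.1, Subgroup.subset_closure ⟨β.1, β.2, rfl⟩⟩ :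
        Subgroup.closure (r '' Rt)))
      (fun w' β => (⟨(w' : W) • (β : R), hRtinv w' β β.2⟩ : Rt)),
      FreeGroup.lift (fun β : Rt => (⟨r β.1, Subgroup.subset_closure ⟨β.1, β.2, rfl⟩⟩ :
        Subgroup.closure (r '' Rt))) x = 1) := by
    rintro x ((⟨α, β, hab, rfl⟩ | ⟨α, rfl⟩) | ⟨α, β, rfl⟩)
    · rw [map_mul, map_inv, FreeGroup.lift_apply_of, FreeGroup.lift_apply_of]
      exact mul_inv_eq_one.mpr hab
    · rw [map_mul, FreeGroup.lift_apply_of]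
      exact Subtype.ext (hinv α.1)
    · simp only [map_mul, map_inv, FreeGroup.lift_apply_of]
      apply mul_inv_eq_one.mpr
      apply Subtype.ext
      show r α.1 * r β.1 * (r α.1)⁻¹ = r ((r α.1) • β.1)
      exact hconj α.1 β.1
  have hinj := hsubpc hsub
  -- the comparison homomorphism
  have hψrel : (∀ x ∈ conjRels
      (fun β : Rt => (⟨r β.1, Subgroup.subset_closure ⟨β.1, β.2, rfl⟩⟩ :
        Subgroup.closure (r '' Rt)))
      (fun w' β => (⟨(w' : W) • (β : R), hRtinv w' β β.2⟩ : Rt)),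
      FreeGroup.lift (fun β : Rt =>
        (PresentedGroup.of β.1 : PresentedGroup (conjRels r (fun w β => w • β)))) x = 1) := by
    rintro x ((⟨α, β, hab, rfl⟩ | ⟨α, rfl⟩) | ⟨α, β, rfl⟩)
    · rw [map_mul, map_inv, FreeGroup.lift_apply_of, FreeGroup.lift_apply_of]
      have : r α.1 = r β.1 := Subtype.ext_iff.mp hab
      rw [F2 _ _ this, mul_inv_cancel]
    · rw [map_mul, FreeGroup.lift_apply_of]
      exact F1 α.1
    · simp only [map_mul, map_inv, FreeGroup.lift_apply_of]
      apply mul_inv_eq_one.mpr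
      exact F3 α.1 β.1
  set ψ := PresentedGroup.toGroup hψrel with hψdef
  have Hrange : ∀ g ∈ H, ∃ y, ψ y = g := by
    intro g hg
    induction hg using Subgroup.closure_induction with
    | mem y hy =>
      obtain ⟨β, rfl⟩ := hy
      exact ⟨PresentedGroup.of β, by rw [hψdef]; exact PresentedGroup.toGroup.of hψrel⟩
    | one => exact ⟨1, map_one ψ⟩
    | mul a b ha hb iha ihb =>
      obtain ⟨y1, rfl⟩ := iha
      obtain ⟨y2, rfl⟩ := ihb
      exact ⟨y1 * y2, map_mul ψ y1 y2⟩
    | inv a ha iha =>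
      obtain ⟨y1, rfl⟩ := iha
      exact ⟨y1⁻¹, map_inv ψ y1⟩
  have πψ : ∀ y, π (ψ y) = ((PresentedGroup.toGroup hsub y :
      Subgroup.closure (r '' Rt)) : W) := by
    have hcomp : π.comp ψ =
        ((Subgroup.closure (r '' Rt)).subtype).comp (PresentedGroup.toGroup hsub) := by
      apply PresentedGroup.ext
      intro β
      simp only [MonoidHom.comp_apply, hψdef, PresentedGroup.toGroup.of, Fπ]
      rfl
    intro y
    exact DFunLike.congr_fun hcomp y
  -- conclusion
  apply (injective_iff_map_eq_one π).mpr
  intro g hg1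
  have hgH : g ∈ H := kerH g (by rw [hg1]; exact one_mem _)
  obtain ⟨y, rfl⟩ := Hrange g hgH
  have h7 : ((PresentedGroup.toGroup hsub y : Subgroup.closure (r '' Rt)) : W) = 1 := by
    rw [← πψ y]
    exact hg1
  have h8 : PresentedGroup.toGroup hsub y = 1 :=
    Subtype.ext (h7.trans (OneMemClass.coe_one _).symm)
  have h9 : y = 1 := hinj (by rw [h8, map_one])
  rw [h9, map_one]
end

section
/- Let R be an extended affine root system in V with isotropic part R⁰ = R ∩ V⁰ and anisotropic roots R^× = R \ R⁰. Then IRC(R^×) = R, where IRC(R^×) := ((R^× − R^×) ∩ V⁰) ∪ R^×. In particular, every isotropic root of R is a difference of two anisotropic roots. -/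
/-- Let `R` be an extended affine root system in `V` (axioms (R1)–(R8)),
with isotropic roots `R⁰ = R ∩ V⁰` and anisotropic roots `R^× = R \ R⁰`. Then
`IRC(R^×) = ((R^× − R^×) ∩ V⁰) ∪ R^× = R`; in particular every isotropic root of `R`
is a difference of two anisotropic roots. -/
theorem EARS_isotropic_root_closure {V : Type*}
    [NormedAddCommGroup V] [NormedSpace ℝ V] [FiniteDimensional ℝ V]
    (B : V →ₗ[ℝ] V →ₗ[ℝ] ℝ)
    (hsymm : ∀ u v : V, B u v = B v u)
    (hpos : ∀ v : V, 0 ≤ B v v)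
    (R : Set V)
    -- (R1)
    (hR1 : (0 : V) ∈ R)
    -- (R2)
    (hR2 : ∀ v ∈ R, -v ∈ R)
    -- (R3)
    (hR3 : Submodule.span ℝ R = ⊤)
    -- (R4)
    (hR4 : ∀ α ∈ R \ {v : V | B v v = 0}, (2 : ℝ) • α ∉ R)
    -- (R5)
    (hR5 : ∀ v ∈ R, ∃ ε > (0 : ℝ), ∀ u ∈ R, ‖u - v‖ < ε → u = v)
    -- (R6)
    (hR6 : ∀ α ∈ R \ {v : V | B v v = 0}, ∀ β ∈ R, ∃ d u : ℕ,
      ({x : V | ∃ n : ℤ, x = β + (n : ℝ) • α} ∩ R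
        = {x : V | ∃ n : ℤ, -(d : ℤ) ≤ n ∧ n ≤ (u : ℤ) ∧ x = β + (n : ℝ) • α}) ∧
      (d : ℝ) - (u : ℝ) = 2 * B α β / B α α)
    -- (R7)
    (hR7 : ¬ ∃ R₁ R₂ : Set V, R₁.Nonempty ∧ R₂.Nonempty ∧ R₁ ∩ R₂ = ∅ ∧
      R₁ ∪ R₂ = R \ {v : V | B v v = 0} ∧ ∀ a ∈ R₁, ∀ b ∈ R₂, B a b = 0)
    -- (R8)
    (hR8 : ∀ σ ∈ R ∩ {v : V | B v v = 0}, ∃ α ∈ R \ {v : V | B v v = 0}, α + σ ∈ R) :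
    (({v : V | ∃ a ∈ R \ {v : V | B v v = 0}, ∃ b ∈ R \ {v : V | B v v = 0}, v = a - b}
        ∩ {v : V | B v v = 0})
      ∪ (R \ {v : V | B v v = 0})) = R ∧
    ∀ σ ∈ R ∩ {v : V | B v v = 0},
      ∃ a ∈ R \ {v : V | B v v = 0}, ∃ b ∈ R \ {v : V | B v v = 0}, σ = a - b := by

  -- isotropic vectors are orthogonal to everything (Cauchy–Schwarz for psd forms)
  have key : ∀ u v : V, B v v = 0 → B u v = 0 := by
    intro u v hv
    by_contra hc
    have h := hpos (u + (-(B u u + 1) / (2 * B u v)) • v)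
    set t := -(B u u + 1) / (2 * B u v) with ht
    simp only [map_add, map_smul, LinearMap.add_apply, LinearMap.smul_apply,
      smul_eq_mul] at h
    rw [hsymm v u] at h
    have h2 : 2 * t * B u v = -(B u u + 1) := by
      rw [ht]; field_simp
    rw [hv] at h
    nlinarith [h, h2]
  -- Part 2: every isotropic root is a difference of anisotropic roots
  have part2 : ∀ σ ∈ R ∩ {v : V | B v v = 0},
      ∃ a ∈ R \ {v : V | B v v = 0}, ∃ b ∈ R \ {v : V | B v v = 0}, σ = a - b := by
    intro σ hσ
    obtain ⟨α, hα, hadd⟩ := hR8 σ hσ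
    have hσ0 : B σ σ = 0 := hσ.2
    have hασ : B α σ = 0 := key α σ hσ0
    have hσα : B σ α = 0 := by rw [hsymm]; exact hασ
    have hαα : B α α ≠ 0 := hα.2
    have hsum : B (α + σ) (α + σ) = B α α := by
      simp only [map_add, LinearMap.add_apply]
      rw [hασ, hσα, hσ0]; ring
    refine ⟨α + σ, ⟨hadd, ?_⟩, α, hα, by abel⟩
    intro hz
    exact hαα (hsum ▸ hz)
  -- difference set inside V⁰ is contained in R
  have dir1 : ∀ a ∈ R \ {v : V | B v v = 0}, ∀ b ∈ R \ {v : V | B v v = 0},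
      B (a - b) (a - b) = 0 → a - b ∈ R := by
    intro a ha b hb hiso
    have hbb : 0 < B b b := lt_of_le_of_ne (hpos b) (Ne.symm hb.2)
    have haa : 0 < B a a := lt_of_le_of_ne (hpos a) (Ne.symm ha.2)
    have hexp : B a a + B b b = 2 * B b a := by
      have : B (a - b) (a - b) = B a a - B a b - B b a + B b b := by
        simp only [map_sub, LinearMap.sub_apply]; ring
      rw [this] at hiso
      rw [hsymm a b] at hiso
      linarith
    obtain ⟨d, u, hset, heq⟩ := hR6 b hb a ha.1
    have hd1 : (1 : ℤ) ≤ (d : ℤ) := by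
      have hq : 2 * B b a / B b b = (B a a + B b b) / B b b := by rw [hexp]
      have : (1 : ℝ) < (d : ℝ) - (u : ℝ) := by
        rw [heq, hq]
        rw [lt_div_iff₀ hbb]
        linarith
      have hu : (0 : ℝ) ≤ (u : ℝ) := Nat.cast_nonneg u
      have h1 : (1 : ℝ) ≤ (d : ℝ) := by linarith
      exact_mod_cast h1
    have hmem : a - b ∈ {x : V | ∃ n : ℤ, -(d : ℤ) ≤ n ∧ n ≤ (u : ℤ) ∧ x = a + (n : ℝ) • b} := by
      refine ⟨-1, by omega, by omega, ?_⟩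
      push_cast
      module
    rw [← hset] at hmem
    exact hmem.2
  refine ⟨?_, part2⟩
  ext v
  constructor
  · rintro (⟨⟨a, ha, b, hb, rfl⟩, hiso⟩ | hv)
    · exact dir1 a ha b hb hiso
    · exact hv.1
  · intro hv
    by_cases h : B v v = 0
    · left
      obtain ⟨a, ha, b, hb, heq⟩ := part2 v ⟨hv, h⟩
      exact ⟨⟨a, ha, b, hb, heq⟩, h⟩
    · right
      exact ⟨hv, h⟩
end

section
/- Let R^× be a set of anisotropic vectors in V (a finite-dimensional real vector space with positive semidefinite symmetric form with radical V⁰) such that: (i) R^× is invariant under its own reflections, (ii) the image of R^× in V/V⁰ is an irreducible finite crystallographic root system, (iii) the subgroup ⟨R^×⟩ is a lattice (discrete and spanning) in V, and (iv) α ∈ R^× implies 2α ∉ R^×. Then R := ((R^× − R^×) ∩ V⁰) ∪ R^× ∪ {0} satisfies the string axiom (R6): for all α ∈ R^×, β ∈ R there exist d, u ∈ ℤ≥0 with {β + nα : n ∈ ℤ} ∩ R = {β − dα, …, β + uα} and d − u = 2(α,β)/(α,α). -/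
lemma semidef_rad {V : Type*} [AddCommGroup V] [Module ℝ V]
    (B : V →ₗ[ℝ] V →ₗ[ℝ] ℝ) (hsymm : ∀ u v : V, B u v = B v u)
    (hpos : ∀ v : V, 0 ≤ B v v) {v : V} (h : B v v = 0) (w : V) : B v w = 0 := by
  by_contra h'
  have key := hpos (w + (-(B w w + 1) / (2 * B v w)) • v)
  set t := -(B w w + 1) / (2 * B v w) with ht
  have hexp : B (w + t • v) (w + t • v) = B w w + 2 * t * B v w := by
    simp only [map_add, map_smul, LinearMap.add_apply, LinearMap.smul_apply, smul_eq_mul,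
      hsymm w v, h]
    ring
  rw [hexp, ht] at key
  have h2 : 2 * (-(B w w + 1) / (2 * B v w)) * B v w = -(B w w + 1) := by
    field_simp
  nlinarith [key, h2]

lemma semidef_cs {V : Type*} [AddCommGroup V] [Module ℝ V]
    (B : V →ₗ[ℝ] V →ₗ[ℝ] ℝ) (hsymm : ∀ u v : V, B u v = B v u)
    (hpos : ∀ v : V, 0 ≤ B v v) (v w : V) : (B v w) ^ 2 ≤ B v v * B w w := by
  rcases eq_or_lt_of_le (hpos w) with h | h
  · have h0 : B w v = 0 := semidef_rad B hsymm hpos h.symm v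
    rw [hsymm v w, h0]
    nlinarith [hpos v, h]
  · have key := hpos (v - (B v w / B w w) • w)
    have hexp : B (v - (B v w / B w w) • w) (v - (B v w / B w w) • w)
        = B v v - (B v w)^2 / B w w := by
      simp only [map_sub, map_smul, LinearMap.sub_apply, LinearMap.smul_apply, smul_eq_mul,
        hsymm w v]
      field_simp
      ring
    rw [hexp, sub_nonneg, div_le_iff₀ h] at key
    nlinarith [key]

/-- Let `R^×` be a set of anisotropic vectors in a finite-dimensional
real vector space `V` with positive semidefinite symmetric bilinear form `B` and
radical `V⁰ = ker B` such that: (i) `R^×` is invariant under its own reflections,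
(ii) the image of `R^×` in `V/V⁰` is an irreducible finite crystallographic root
system, (iii) the subgroup `⟨R^×⟩` is a lattice (discrete and spanning) in `V`, and
(iv) `α ∈ R^×` implies `2α ∉ R^×`. Then `R := ((R^× − R^×) ∩ V⁰) ∪ R^× ∪ {0}`
satisfies the string axiom (R6). -/
theorem IRC_satisfies_string_axiom {V : Type*}
    [NormedAddCommGroup V] [NormedSpace ℝ V] [FiniteDimensional ℝ V]
    (B : V →ₗ[ℝ] V →ₗ[ℝ] ℝ)
    (hsymm : ∀ u v : V, B u v = B v u)
    (hpos : ∀ v : V, 0 ≤ B v v)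
    (Rx : Set V)
    (haniso : ∀ α ∈ Rx, B α α ≠ 0)
    -- (i) invariance under its own reflections
    (hrefl : ∀ α ∈ Rx, ∀ β ∈ Rx, β - (2 * B β α / B α α) • α ∈ Rx)
    -- (ii) the image in `V/V⁰` is an irreducible finite crystallographic root system
    (hfin : Set.Finite ((LinearMap.ker B).mkQ '' Rx))
    (hcrys : ∀ α ∈ Rx, ∀ β ∈ Rx, ∃ m : ℤ, 2 * B β α / B α α = (m : ℝ))
    (hirr : ¬ ∃ R₁ R₂ : Set V, R₁.Nonempty ∧ R₂.Nonempty ∧ R₁ ∩ R₂ = ∅ ∧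
      R₁ ∪ R₂ = Rx ∧ ∀ a ∈ R₁, ∀ b ∈ R₂, B a b = 0)
    -- (iii) `⟨R^×⟩` is a lattice in `V`
    (hspan : Submodule.span ℝ Rx = ⊤)
    (hdisc : ∀ v ∈ AddSubgroup.closure Rx, ∃ ε > (0 : ℝ),
      ∀ u ∈ AddSubgroup.closure Rx, ‖u - v‖ < ε → u = v)
    -- (iv)
    (h2 : ∀ α ∈ Rx, (2 : ℝ) • α ∉ Rx) :
    ∀ α ∈ Rx,
      ∀ β ∈ (({v : V | ∃ a ∈ Rx, ∃ b ∈ Rx, v = a - b} ∩ {v : V | B v v = 0})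
          ∪ Rx ∪ {(0 : V)}),
        ∃ d u : ℕ,
          ({x : V | ∃ n : ℤ, x = β + (n : ℝ) • α} ∩
              (({v : V | ∃ a ∈ Rx, ∃ b ∈ Rx, v = a - b} ∩ {v : V | B v v = 0})
                ∪ Rx ∪ {(0 : V)})
            = {x : V | ∃ n : ℤ, -(d : ℤ) ≤ n ∧ n ≤ (u : ℤ) ∧ x = β + (n : ℝ) • α}) ∧
          (d : ℝ) - (u : ℝ) = 2 * B α β / B α α := by
  intro α hα β hβ
  have hBαα : 0 < B α α := lt_of_le_of_ne (hpos α) (Ne.symm (haniso α hα))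
  have hrad : ∀ v : V, B v v = 0 → ∀ w, B v w = 0 :=
    fun v h w => semidef_rad B hsymm hpos h w
  set R : Set V := ({v : V | ∃ a ∈ Rx, ∃ b ∈ Rx, v = a - b} ∩ {v : V | B v v = 0})
      ∪ Rx ∪ {(0 : V)} with hRdef
  have memR : ∀ v : V, v ∈ R ↔
      ((∃ a ∈ Rx, ∃ b ∈ Rx, v = a - b) ∧ B v v = 0) ∨ v ∈ Rx ∨ v = 0 := by
    intro v
    rw [hRdef]
    simp only [Set.mem_union, Set.mem_inter_iff, Set.mem_setOf_eq, Set.mem_singleton_iff,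
      or_assoc]
  have hneg : ∀ γ, γ ∈ Rx → -γ ∈ Rx := by
    intro γ hγ
    have hBγ : (0:ℝ) < B γ γ := lt_of_le_of_ne (hpos γ) (Ne.symm (haniso γ hγ))
    have h := hrefl γ hγ γ hγ
    have h1 : 2 * B γ γ / B γ γ = (2:ℝ) := by field_simp
    rw [h1] at h
    have h2 : γ - (2:ℝ) • γ = -γ := by module
    rwa [h2] at h
  -- Claim A : adding a root to an element of R with negative pairing stays in R
  have claimA : ∀ α' ∈ Rx, ∀ γ ∈ R, B γ α' < 0 → γ + α' ∈ R := by
    intro α' hα' γ hγR hlt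
    have hBa : (0:ℝ) < B α' α' := lt_of_le_of_ne (hpos α') (Ne.symm (haniso α' hα'))
    rcases (memR γ).1 hγR with ⟨_, h0⟩ | hγx | rfl
    · exact absurd (hrad γ h0 α') hlt.ne
    case inr.inr => simp at hlt
    · have hBγ : (0:ℝ) < B γ γ := lt_of_le_of_ne (hpos γ) (Ne.symm (haniso γ hγx))
      obtain ⟨p, hp⟩ := hcrys α' hα' γ hγx
      obtain ⟨q, hq⟩ := hcrys γ hγx α' hα'
      have hp' : 2 * B γ α' = (p:ℝ) * B α' α' := by
        rw [div_eq_iff hBa.ne'] at hp; exact hp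
      have hq' : 2 * B α' γ = (q:ℝ) * B γ γ := by
        rw [div_eq_iff hBγ.ne'] at hq; exact hq
      have hsγ : B α' γ = B γ α' := hsymm α' γ
      have hpneg : p ≤ -1 := by
        have h1 : (p:ℝ) < 0 := by nlinarith
        have h2 : p < 0 := by exact_mod_cast h1
        omega
      have hqneg : q ≤ -1 := by
        have h1 : (q:ℝ) < 0 := by nlinarith
        have h2 : q < 0 := by exact_mod_cast h1
        omega
      have hcs := semidef_cs B hsymm hpos γ α'
      have hpq : p * q ≤ 4 := by
        have h1 : ((p * q : ℤ):ℝ) * (B α' α' * B γ γ) = 4 * (B γ α')^2 := by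
          push_cast; nlinarith [hp', hq']
        have hX : (0:ℝ) < B α' α' * B γ γ := mul_pos hBa hBγ
        have h2 : ((p * q : ℤ):ℝ) ≤ 4 := by nlinarith [h1, hcs, hX]
        exact_mod_cast h2
      by_cases hq1 : q = -1
      · have h := hrefl γ hγx α' hα'
        rw [hq, hq1] at h
        have he : α' - (((-1 : ℤ)):ℝ) • γ = γ + α' := by push_cast; module
        rw [he] at h
        exact (memR _).2 (Or.inr (Or.inl h))
      · by_cases hp1 : p = -1
        · have h := hrefl α' hα' γ hγx
          rw [hp, hp1] at h
          have he : γ - (((-1 : ℤ)):ℝ) • α' = γ + α' := by push_cast; module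
          rw [he] at h
          exact (memR _).2 (Or.inr (Or.inl h))
        · have hple : p ≤ -2 := by omega
          have hqle : q ≤ -2 := by omega
          have hp2 : p = -2 ∧ q = -2 := by
            constructor
            · by_contra hc
              have hp3 : p ≤ -3 := by omega
              nlinarith [mul_nonneg (show (0:ℤ) ≤ -p - 3 by omega)
                (show (0:ℤ) ≤ -q - 2 by omega), hpq]
            · by_contra hc
              have hq3 : q ≤ -3 := by omega
              nlinarith [mul_nonneg (show (0:ℤ) ≤ -p - 2 by omega)
                (show (0:ℤ) ≤ -q - 3 by omega), hpq]
          have e1 : B γ α' = - B α' α' := by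
            rw [hp2.1] at hp'; push_cast at hp'; linarith
          have e2 : B α' γ = - B γ γ := by
            rw [hp2.2] at hq'; push_cast at hq'; linarith
          have e3 : B γ γ = B α' α' := by linarith [e1, e2, hsγ]
          have hz : B (γ + α') (γ + α') = 0 := by
            simp only [map_add, LinearMap.add_apply]
            linarith [e1, e2, e3, hsγ]
          exact (memR _).2 (Or.inl ⟨⟨γ, hγx, -α', hneg α' hα', by abel⟩, hz⟩)
  have claimB : ∀ α' ∈ Rx, ∀ γ ∈ R, 0 < B γ α' → γ - α' ∈ R := by
    intro α' hα' γ hγR hlt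
    have h := claimA (-α') (hneg α' hα') γ hγR (by simp only [map_neg]; linarith)
    rwa [← sub_eq_add_neg] at h
  -- the string index set
  set S : Set ℤ := {n : ℤ | β + (n:ℝ) • α ∈ R} with hSdef
  have memS : ∀ n : ℤ, n ∈ S ↔ β + (n:ℝ) • α ∈ R := fun n => Iff.rfl
  have h0S : (0:ℤ) ∈ S := by
    rw [memS]
    simpa using hβ
  have hBeval : ∀ n : ℤ, B (β + (n:ℝ) • α) α = B β α + (n:ℝ) * B α α := by
    intro n
    simp [map_add, map_smul]
  -- finiteness of S
  have hSfin : S.Finite := by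
    have hginj : Function.Injective (fun n : ℤ => (LinearMap.ker B).mkQ (β + (n:ℝ) • α)) := by
      intro n n' h
      simp only [Submodule.mkQ_apply] at h
      rw [Submodule.Quotient.eq] at h
      have he : (β + (n:ℝ) • α) - (β + ((n':ℤ):ℝ) • α) = ((n - n' : ℤ):ℝ) • α := by
        push_cast; module
      rw [he, LinearMap.mem_ker] at h
      have h2 : B (((n - n' : ℤ):ℝ) • α) α = 0 := by rw [h]; rfl
      rw [map_smul, LinearMap.smul_apply, smul_eq_mul] at h2
      have h3 : ((n - n' : ℤ):ℝ) = 0 := by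
        rcases mul_eq_zero.mp h2 with h3 | h3
        · exact h3
        · exact absurd h3 hBαα.ne'
      have h4 : n - n' = 0 := by exact_mod_cast h3
      omega
    have hsub : S ⊆ ((fun n : ℤ => (LinearMap.ker B).mkQ (β + (n:ℝ) • α)) ⁻¹'
        ((LinearMap.ker B).mkQ '' Rx)) ∪ {n : ℤ | B β α + (n:ℝ) * B α α = 0} := by
      intro n hn
      rcases (memR _).1 ((memS n).1 hn) with ⟨_, h0⟩ | hx | h0
      · right
        rw [Set.mem_setOf_eq, ← hBeval n]
        exact hrad _ h0 α
      · left
        exact ⟨_, hx, rfl⟩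
      · right
        rw [Set.mem_setOf_eq, ← hBeval n, h0]
        simp
    have hfin1 : (((fun n : ℤ => (LinearMap.ker B).mkQ (β + (n:ℝ) • α)) ⁻¹'
        ((LinearMap.ker B).mkQ '' Rx))).Finite := Set.Finite.preimage hginj.injOn hfin
    have hfin2 : ({n : ℤ | B β α + (n:ℝ) * B α α = 0}).Finite := by
      apply Set.Subsingleton.finite
      intro n hn n' hn'
      rw [Set.mem_setOf_eq] at hn hn'
      have h1 : ((n:ℝ) - (n':ℝ)) * B α α = 0 := by linarith
      have h2 : (n:ℝ) = (n':ℝ) := by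
        rcases mul_eq_zero.mp h1 with h | h
        · linarith
        · exact absurd h hBαα.ne'
      exact_mod_cast h2
    exact (hfin1.union hfin2).subset hsub
  -- min and max
  have hTne : hSfin.toFinset.Nonempty := ⟨0, hSfin.mem_toFinset.2 h0S⟩
  set a := hSfin.toFinset.min' hTne with hadef
  set b := hSfin.toFinset.max' hTne with hbdef
  have haS : a ∈ S := hSfin.mem_toFinset.1 (hSfin.toFinset.min'_mem hTne)
  have hbS : b ∈ S := hSfin.mem_toFinset.1 (hSfin.toFinset.max'_mem hTne)
  have hbound : ∀ n ∈ S, a ≤ n ∧ n ≤ b := fun n hn =>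
    ⟨hSfin.toFinset.min'_le n (hSfin.mem_toFinset.2 hn),
     hSfin.toFinset.le_max' n (hSfin.mem_toFinset.2 hn)⟩
  have ha0 : a ≤ 0 := (hbound 0 h0S).1
  have hb0 : 0 ≤ b := (hbound 0 h0S).2
  -- gap lemmas
  have hgapA : ∀ n : ℤ, n ∈ S → (n+1) ∉ S → 0 ≤ B β α + (n:ℝ) * B α α := by
    intro n hn hn1
    by_contra hneg'
    push_neg at hneg'
    have h := claimA α hα _ ((memS n).1 hn) (by rw [hBeval n]; linarith)
    apply hn1
    rw [memS]
    have he : β + ((n:ℤ):ℝ) • α + α = β + (((n+1 : ℤ)):ℝ) • α := by push_cast; module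
    rwa [he] at h
  have hgapB : ∀ n : ℤ, n ∈ S → (n-1) ∉ S → B β α + (n:ℝ) * B α α ≤ 0 := by
    intro n hn hn1
    by_contra hneg'
    push_neg at hneg'
    have h := claimB α hα _ ((memS n).1 hn) (by rw [hBeval n]; linarith)
    apply hn1
    rw [memS]
    have he : β + ((n:ℤ):ℝ) • α - α = β + (((n-1 : ℤ)):ℝ) • α := by push_cast; module
    rwa [he] at h
  -- no gaps
  have hgap : ∀ n : ℤ, a ≤ n → n ≤ b → n ∈ S := by
    intro n h1 h2
    by_contra hnS
    have hane : a ≠ n := fun h => hnS (h ▸ haS)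
    have hbne : b ≠ n := fun h => hnS (h ▸ hbS)
    have hF1ne : (hSfin.toFinset.filter (fun k => k < n)).Nonempty :=
      ⟨a, Finset.mem_filter.2 ⟨hSfin.mem_toFinset.2 haS, lt_of_le_of_ne h1 hane⟩⟩
    have hF2ne : (hSfin.toFinset.filter (fun k => n < k)).Nonempty :=
      ⟨b, Finset.mem_filter.2 ⟨hSfin.mem_toFinset.2 hbS,
        lt_of_le_of_ne h2 (Ne.symm hbne)⟩⟩
    set r := (hSfin.toFinset.filter (fun k => k < n)).max' hF1ne with hrdef
    set s := (hSfin.toFinset.filter (fun k => n < k)).min' hF2ne with hsdef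
    have hrmem := (hSfin.toFinset.filter (fun k => k < n)).max'_mem hF1ne
    have hsmem := (hSfin.toFinset.filter (fun k => n < k)).min'_mem hF2ne
    have hrS : r ∈ S := hSfin.mem_toFinset.1 (Finset.mem_filter.1 hrmem).1
    have hsS : s ∈ S := hSfin.mem_toFinset.1 (Finset.mem_filter.1 hsmem).1
    have hrn : r < n := (Finset.mem_filter.1 hrmem).2
    have hns : n < s := (Finset.mem_filter.1 hsmem).2
    have hr1 : (r+1) ∉ S := by
      intro hmem
      rcases lt_or_eq_of_le (Int.add_one_le_iff.mpr hrn) with h | h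
      · have := (hSfin.toFinset.filter (fun k => k < n)).le_max'
          (r+1) (Finset.mem_filter.2 ⟨hSfin.mem_toFinset.2 hmem, h⟩)
        rw [← hrdef] at this
        omega
      · exact hnS (by rw [← h]; exact hmem)
    have hs1 : (s-1) ∉ S := by
      intro hmem
      have hns1 : n ≤ s - 1 := by omega
      rcases lt_or_eq_of_le hns1 with h | h
      · have := (hSfin.toFinset.filter (fun k => n < k)).min'_le
          (s-1) (Finset.mem_filter.2 ⟨hSfin.mem_toFinset.2 hmem, h⟩)
        rw [← hsdef] at this
        omega
      · exact hnS (by rw [h]; exact hmem)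
    have hA := hgapA r hrS hr1
    have hB := hgapB s hsS hs1
    have hrs : (r:ℝ) < (s:ℝ) := by exact_mod_cast lt_trans hrn hns
    nlinarith [hA, hB, hBαα, hrs]
  -- the integer m
  have hm : ∃ m : ℤ, (m:ℝ) * B α α = 2 * B β α := by
    rcases (memR β).1 hβ with ⟨_, h0⟩ | hx | h0
    · exact ⟨0, by rw [hrad β h0 α]; simp⟩
    · obtain ⟨m, hm⟩ := hcrys α hα β hx
      rw [div_eq_iff hBαα.ne'] at hm
      exact ⟨m, by linarith⟩
    · exact ⟨0, by rw [h0]; simp⟩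
  obtain ⟨m, hm⟩ := hm
  -- reflection invariance of S
  have hreflS : ∀ n : ℤ, n ∈ S → -m - n ∈ S := by
    intro n hn
    have key : B β α + (n:ℝ) * B α α = 0 → -m - n ∈ S := by
      intro h1
      have h2 : ((m:ℝ) + 2*(n:ℝ)) * B α α = 0 := by linarith [hm]
      have h3 : (m:ℝ) + 2*(n:ℝ) = 0 := by
        rcases mul_eq_zero.mp h2 with h | h
        · exact h
        · exact absurd h hBαα.ne'
      have h4 : ((m + 2*n : ℤ):ℝ) = 0 := by push_cast; linarith
      have h5 : m + 2*n = 0 := by exact_mod_cast h4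
      have h6 : -m - n = n := by omega
      rwa [h6]
    rcases (memR _).1 ((memS n).1 hn) with ⟨_, h0⟩ | hx | h0
    · exact key (by rw [← hBeval n]; exact hrad _ h0 α)
    · have h := hrefl α hα _ hx
      have hsc : 2 * B (β + (n:ℝ) • α) α / B α α = ((m + 2*n : ℤ):ℝ) := by
        rw [hBeval n, div_eq_iff hBαα.ne']
        push_cast
        linarith [hm]
      rw [hsc] at h
      have he : β + ((n:ℤ):ℝ) • α - ((m + 2*n : ℤ):ℝ) • α
          = β + ((-m - n : ℤ):ℝ) • α := by push_cast; module
      rw [he] at h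
      exact (memS _).2 ((memR _).2 (Or.inr (Or.inl h)))
    · exact key (by rw [← hBeval n, h0]; simp)
  have hab : a + b = -m := by
    have h1 := (hbound _ (hreflS a haS)).2
    have h2 := (hbound _ (hreflS b hbS)).1
    omega
  -- conclusion
  refine ⟨(-a).toNat, b.toNat, ?_, ?_⟩
  · ext x
    simp only [Set.mem_inter_iff, Set.mem_setOf_eq]
    constructor
    · rintro ⟨⟨n, rfl⟩, hxR⟩
      have hnS : n ∈ S := (memS n).2 hxR
      obtain ⟨h1, h2⟩ := hbound n hnS
      refine ⟨n, ?_, ?_, rfl⟩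
      · rw [Int.toNat_of_nonneg (by omega : (0:ℤ) ≤ -a)]; omega
      · rw [Int.toNat_of_nonneg hb0]; omega
    · rintro ⟨n, h1, h2, rfl⟩
      rw [Int.toNat_of_nonneg (by omega : (0:ℤ) ≤ -a)] at h1
      rw [Int.toNat_of_nonneg hb0] at h2
      exact ⟨⟨n, rfl⟩, (memS n).1 (hgap n (by omega) h2)⟩
  · rw [hsymm α β, eq_div_iff hBαα.ne']
    have ea : (((-a).toNat : ℕ) : ℝ) = -(a:ℝ) := by
      have h := Int.toNat_of_nonneg (by omega : (0:ℤ) ≤ -a)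
      exact_mod_cast congrArg (fun z : ℤ => (z:ℝ)) h
    have eb : ((b.toNat : ℕ) : ℝ) = (b:ℝ) := by
      have h := Int.toNat_of_nonneg hb0
      exact_mod_cast congrArg (fun z : ℤ => (z:ℝ)) h
    rw [ea, eb]
    have hmab : -(a:ℝ) - (b:ℝ) = (m:ℝ) := by
      have h : -a - b = m := by omega
      exact_mod_cast congrArg (fun z : ℤ => (z:ℝ)) h
    rw [hmab]
    exact hm
end

section
/- Let R be an EARS of type BC_ℓ given by R = (S+S) ∪ (Ṙ_sh + S) ∪ (Ṙ_lg + L) ∪ (Ṙ_ex + E) with semilattices S, L and translated semilattice E satisfying L + 2S ⊆ L, S + L ⊆ S, E + 2L ⊆ E, L + E ⊆ L. Set S' := S ∪ (1/2)E. Then S' is a semilattice (0 ∈ S', S' + 2S' ⊆ S') and satisfies L + 2S' ⊆ L and S' + L ⊆ S'. -/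
/-- Let `R` be an EARS of type `BC_ℓ` built from semilattices `S`, `L`
and a translated semilattice `E` in `V⁰`, satisfying `L + 2S ⊆ L`, `S + L ⊆ S`,
`E + 2L ⊆ E`, `L + E ⊆ L`. Set `S' := S ∪ (1/2)E`. Then `S'` is a semilattice
(`0 ∈ S'`, `S' + 2S' ⊆ S'`) and satisfies `L + 2S' ⊆ L` and `S' + L ⊆ S'`. -/
theorem trimmed_semilattice {V : Type*}
    [NormedAddCommGroup V] [NormedSpace ℝ V]
    (S L E : Set V)
    -- `S` is a semilattice
    (hS0 : (0 : V) ∈ S)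
    (hSadd : ∀ s ∈ S, ∀ t ∈ S, s + (2 : ℝ) • t ∈ S)
    (hSspan : Submodule.span ℝ S = ⊤)
    (hSdisc : ∀ s ∈ S, ∃ ε > (0 : ℝ), ∀ t ∈ S, ‖t - s‖ < ε → t = s)
    -- `L` is a semilattice
    (hL0 : (0 : V) ∈ L)
    (hLadd : ∀ s ∈ L, ∀ t ∈ L, s + (2 : ℝ) • t ∈ L)
    (hLspan : Submodule.span ℝ L = ⊤)
    (hLdisc : ∀ s ∈ L, ∃ ε > (0 : ℝ), ∀ t ∈ L, ‖t - s‖ < ε → t = s)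
    -- `E` is a translated semilattice
    (hEadd : ∀ s ∈ E, ∀ t ∈ E, s + (2 : ℝ) • t ∈ E)
    (hEspan : Submodule.span ℝ E = ⊤)
    (hEdisc : ∀ s ∈ E, ∃ ε > (0 : ℝ), ∀ t ∈ E, ‖t - s‖ < ε → t = s)
    -- compatibility conditions
    (hLS : ∀ l ∈ L, ∀ s ∈ S, l + (2 : ℝ) • s ∈ L)
    (hSL : ∀ s ∈ S, ∀ l ∈ L, s + l ∈ S)
    (hEL : ∀ e ∈ E, ∀ l ∈ L, e + (2 : ℝ) • l ∈ E)
    (hLE : ∀ l ∈ L, ∀ e ∈ E, l + e ∈ L) :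
    (0 : V) ∈ S ∪ (fun e => (2 : ℝ)⁻¹ • e) '' E ∧
    (∀ s ∈ S ∪ (fun e => (2 : ℝ)⁻¹ • e) '' E, ∀ t ∈ S ∪ (fun e => (2 : ℝ)⁻¹ • e) '' E,
      s + (2 : ℝ) • t ∈ S ∪ (fun e => (2 : ℝ)⁻¹ • e) '' E) ∧
    (∀ l ∈ L, ∀ s ∈ S ∪ (fun e => (2 : ℝ)⁻¹ • e) '' E, l + (2 : ℝ) • s ∈ L) ∧
    (∀ s ∈ S ∪ (fun e => (2 : ℝ)⁻¹ • e) '' E, ∀ l ∈ L, s + l ∈ S ∪ (fun e => (2 : ℝ)⁻¹ • e) '' E) := by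
  -- E ⊆ L since 0 ∈ L and L + E ⊆ L
  have hEsubL : ∀ e ∈ E, e ∈ L := fun e he => by simpa using hLE 0 hL0 e he
  refine ⟨Or.inl hS0, ?_, ?_, ?_⟩
  · rintro s (hs | ⟨e, he, rfl⟩) t (ht | ⟨f, hf, rfl⟩)
    · exact Or.inl (hSadd s hs t ht)
    · -- s + 2•(f/2) = s + f ∈ S since f ∈ L and S + L ⊆ S
      have : s + (2 : ℝ) • ((2:ℝ)⁻¹ • f) = s + f := by
        rw [smul_smul]; norm_num
      rw [this]
      exact Or.inl (hSL s hs f (hEsubL f hf))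
    · -- e/2 + 2t = (e + 2•(2t))/2, with 2t = 0 + 2t ∈ L
      have h2t : (2:ℝ) • t ∈ L := by simpa using hLS 0 hL0 t ht
      refine Or.inr ⟨e + (2:ℝ) • ((2:ℝ) • t), hEL e he _ h2t, ?_⟩
      simp only [smul_add, smul_smul]
      norm_num
    · refine Or.inr ⟨e + (2:ℝ) • f, hEadd e he f hf, ?_⟩
      simp only [smul_add, smul_smul]
      norm_num
  · rintro l hl s (hs | ⟨e, he, rfl⟩)
    · exact hLS l hl s hs
    · have : l + (2:ℝ) • ((2:ℝ)⁻¹ • e) = l + e := by rw [smul_smul]; norm_num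
      rw [this]
      exact hLE l hl e he
  · rintro s (hs | ⟨e, he, rfl⟩) l hl
    · exact Or.inl (hSL s hs l hl)
    · refine Or.inr ⟨e + (2:ℝ) • l, hEL e he l hl, ?_⟩
      simp only [smul_add, smul_smul]
      norm_num
end
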